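/- arXiv:1201.2212 — 7 statements merged into one kernel-verified Lean document; each statement's English description precedes it below -/
import Mathlib

section
/- Let H be a hyperplane arrangement in ℝ^d. Then the number of regions of H (connected components of ℝ^d \ ⋃H) is finite and equals (−1)^d · h_H(−1), where h_H is the characteristic polynomial of H. -/
open scoped Classical

/-- The flats of a hyperplane arrangement `H` in `ℝ^d`: nonempty intersections of
subcollections of `H` (including the empty intersection `ℝ^d`, i.e. `⊤`). -/
noncomputable def flats (d : ℕ) (H : Finset (AffineSubspace ℝ (Fin d → ℝ))) :
    Finset (AffineSubspace ℝ (Fin d → ℝ)) :=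
  (H.powerset.image fun S => S.inf id).filter fun F => ((F : Set (Fin d → ℝ))).Nonempty

/-!
Choose for each hyperplane `B` an affine function `g B` vanishing exactly on `B`. A region is then a
nonempty open convex cell `{x | 0 < g B x for B ∈ S, g B x < 0 for B ∉ S}`, so regions are counted
by the realizable sign vectors `S`. Deletion–restriction: inside a flat `E ⊄ A`, a sign vector of
`H` is realized on at least one side of `A`, and on both sides exactly when it is realized on
`A ∩ E` (perturb off `A`, resp. use the intermediate value theorem in the convex cell). Hence
`r(E, H ∪ {A}) = r(E, H) + r(A ∩ E, H)`, the recursion also satisfied by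
`(-1)^dim E * ∑_{S ⊆ H, ⋂S ∩ E ≠ ∅} (-1)^|S| (-1)^dim(⋂S ∩ E)`, because
`dim (A ∩ E) = dim E - 1`. For `E = ℝ^d`, Whitney's formula `μ(F) = ∑_{⋂S = F} (-1)^|S|`, which
follows from `∑_{S ⊆ T} (-1)^|S| = [T = ∅]`, turns this sum into `h_H(-1)`.
-/

open Finset Module

section Mobius

variable {α : Type*}

theorem Finset.sum_filter_le_eq_add_sum_filter_lt [PartialOrder α] {M : Type*} [AddCommMonoid M]
    {L : Finset α} {F : α} (hF : F ∈ L) (f : α → M) :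
    ∑ G ∈ L with F ≤ G, f G = f F + ∑ G ∈ L with F < G, f G := by
  rw [← sum_insert (by simp)]
  congr 1
  ext G
  simp only [mem_filter, mem_insert, le_iff_eq_or_lt]
  grind

theorem Finset.eqOn_of_sum_filter_le_eq [PartialOrder α] {M : Type*} [AddCommGroup M]
    {L : Finset α} {f f' : α → M}
    (h : ∀ F ∈ L, ∑ G ∈ L with F ≤ G, f G = ∑ G ∈ L with F ≤ G, f' G) : Set.EqOn f f' L := by
  intro F hF
  refine (L.finite_toSet.wellFoundedOn (r := (· > ·))).induction hF
    (P := fun F => f F = f' F) fun F hF ih => ?_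
  have hlt : ∑ G ∈ L with F < G, f G = ∑ G ∈ L with F < G, f' G :=
    sum_congr rfl fun G hG => ih G (mem_filter.1 hG).1 (mem_filter.1 hG).2
  have := h F hF
  rwa [sum_filter_le_eq_add_sum_filter_lt hF, sum_filter_le_eq_add_sum_filter_lt hF, hlt,
    add_left_inj] at this

theorem sum_filter_le_of_mobius [PartialOrder α] [OrderTop α] {L : Finset α} {μ : α → ℤ}
    (hμtop : μ ⊤ = 1) (hμ : ∀ F ∈ L, F ≠ ⊤ → μ F = -∑ G ∈ L with F < G, μ G)
    {F : α} (hF : F ∈ L) :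
    ∑ G ∈ L with F ≤ G, μ G = if F = ⊤ then 1 else 0 := by
  rw [sum_filter_le_eq_add_sum_filter_lt hF]
  split_ifs with hFt
  · subst hFt
    simp [hμtop]
  · rw [hμ F hF hFt, neg_add_cancel]

variable [SemilatticeInf α] [OrderTop α]

noncomputable def flatsOf (H : Finset α) (p : α → Prop) : Finset α :=
  {F ∈ H.powerset.image fun S => S.inf id | p F}

noncomputable def whitneyMobius (H : Finset α) (F : α) : ℤ :=
  ∑ S ∈ H.powerset with S.inf id = F, (-1) ^ #S

theorem sum_flatsOf_whitneyMobius_mul {p : α → Prop} {H : Finset α} {w : α → ℤ}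
    (hw : ∀ F, ¬ p F → w F = 0) :
    ∑ F ∈ flatsOf H p, whitneyMobius H F * w F = ∑ S ∈ H.powerset, (-1) ^ #S * w (S.inf id) := by
  rw [flatsOf, sum_filter_of_ne fun F _ hF => by_contra fun hp => hF (by rw [hw F hp, mul_zero])]
  refine sum_image' _ fun S _ => ?_
  rw [whitneyMobius, sum_mul]
  exact sum_congr rfl fun T hT => by rw [(mem_filter.1 hT).2]

theorem sum_filter_le_whitneyMobius {p : α → Prop} (hp : Monotone p) {H : Finset α}
    (hH : ⊤ ∉ H) {F : α} (hF : F ∈ flatsOf H p) :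
    ∑ G ∈ flatsOf H p with F ≤ G, whitneyMobius H G = if F = ⊤ then 1 else 0 := by
  obtain ⟨hFimg, hpF⟩ := mem_filter.1 hF
  have hpowerset : {S ∈ H.powerset | F ≤ S.inf id} = {B ∈ H | F ≤ B}.powerset := by
    ext S
    simp only [mem_filter, mem_powerset, Finset.le_inf_iff, subset_iff, id]
    grind
  have hempty : {B ∈ H | F ≤ B} = ∅ ↔ F = ⊤ := by
    obtain ⟨S₀, hS₀, rfl⟩ := mem_image.1 hFimg
    rw [filter_eq_empty_iff]
    refine ⟨fun h => eq_top_iff.2 (Finset.le_inf fun B hB => ?_), fun h B hB hle => ?_⟩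
    · exact (h (mem_powerset.1 hS₀ hB) (inf_le hB)).elim
    · exact hH (top_le_iff.1 (h ▸ hle) ▸ hB)
  calc ∑ G ∈ flatsOf H p with F ≤ G, whitneyMobius H G
      = ∑ G ∈ flatsOf H p, whitneyMobius H G * if F ≤ G then 1 else 0 := by
        simp_rw [mul_boole, sum_filter]
    _ = ∑ S ∈ H.powerset, (-1) ^ #S * if F ≤ S.inf id then 1 else 0 :=
        sum_flatsOf_whitneyMobius_mul fun G hG => if_neg fun hFG => hG (hp hFG hpF)
    _ = ∑ S ∈ {B ∈ H | F ≤ B}.powerset, (-1) ^ #S := by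
        simp_rw [← hpowerset, sum_filter, mul_boole]
    _ = if F = ⊤ then 1 else 0 := by
        rw [sum_powerset_neg_one_pow_card]
        exact if_congr hempty rfl rfl

theorem eqOn_whitneyMobius {p : α → Prop} (hp : Monotone p) {H : Finset α} (hH : ⊤ ∉ H)
    {μ : α → ℤ} (hμtop : μ ⊤ = 1)
    (hμ : ∀ F ∈ flatsOf H p, F ≠ ⊤ → μ F = -∑ G ∈ flatsOf H p with F < G, μ G) :
    Set.EqOn μ (whitneyMobius H) (flatsOf H p) :=
  eqOn_of_sum_filter_le_eq fun _ hF => by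
    rw [sum_filter_le_of_mobius hμtop hμ hF, sum_filter_le_whitneyMobius hp hH hF]

end Mobius

section Cells

variable {V ι : Type*} [AddCommGroup V] [Module ℝ V] (g : ι → V →ᵃ[ℝ] ℝ)

noncomputable def cell (H S : Finset ι) : Set V :=
  ⋂ B ∈ H, g B ⁻¹' if B ∈ S then Set.Ioi 0 else Set.Iio 0

noncomputable def signVector (H : Finset ι) (x : V) : Finset ι :=
  {B ∈ H | 0 < g B x}

noncomputable def signVectors (H : Finset ι) (s : Set V) : Finset (Finset ι) :=
  {S ∈ H.powerset | (s ∩ cell g H S).Nonempty}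

variable {g} {H S : Finset ι}

theorem mem_cell {x : V} : x ∈ cell g H S ↔ ∀ B ∈ H, if B ∈ S then 0 < g B x else g B x < 0 := by
  simp only [cell, Set.mem_iInter, Set.mem_preimage]
  exact forall₂_congr fun B _ => by split_ifs <;> rfl

theorem ne_zero_of_mem_cell {x : V} (hx : x ∈ cell g H S) {B : ι} (hB : B ∈ H) : g B x ≠ 0 := by
  have := mem_cell.1 hx B hB
  split_ifs at this
  exacts [this.ne', this.ne]

theorem cell_insert (A : ι) :
    cell g (insert A H) S = g A ⁻¹' (if A ∈ S then Set.Ioi 0 else Set.Iio 0) ∩ cell g H S :=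
  set_biInter_insert _ _ _

theorem cell_congr {T : Finset ι} (h : ∀ B ∈ H, B ∈ S ↔ B ∈ T) : cell g H S = cell g H T :=
  Set.iInter₂_congr fun B hB => by rw [if_congr (h B hB) rfl rfl]

theorem preimage_cell {W : Type*} [AddCommGroup W] [Module ℝ W] (ℓ : W →ᵃ[ℝ] V) :
    ℓ ⁻¹' cell g H S = cell (fun B => (g B).comp ℓ) H S := by
  simp only [cell, Set.preimage_iInter₂]
  rfl

theorem isOpen_cell [TopologicalSpace V] (hg : ∀ B ∈ H, Continuous (g B)) :
    IsOpen (cell g H S) :=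
  isOpen_biInter_finset fun B hB => by
    split_ifs
    exacts [isOpen_Ioi.preimage (hg B hB), isOpen_Iio.preimage (hg B hB)]

theorem convex_cell : Convex ℝ (cell g H S) :=
  convex_iInter₂ fun B _ => by
    split_ifs
    exacts [(convex_Ioi 0).affine_preimage _, (convex_Iio 0).affine_preimage _]

theorem signVector_eq_iff {x : V} (hx : ∀ B ∈ H, g B x ≠ 0) :
    signVector g H x = S ↔ S ⊆ H ∧ x ∈ cell g H S := by
  constructor
  · rintro rfl
    refine ⟨filter_subset _ _, mem_cell.2 fun B hB => ?_⟩
    split_ifs with h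
    · exact (mem_filter.1 h).2
    · exact (hx B hB).lt_of_le (not_lt.1 fun hpos => h (mem_filter.2 ⟨hB, hpos⟩))
  · rintro ⟨hSH, hxS⟩
    ext B
    rw [signVector, mem_filter]
    constructor
    · rintro ⟨hB, hpos⟩
      by_contra hBS
      have := mem_cell.1 hxS B hB
      rw [if_neg hBS] at this
      linarith
    · intro hBS
      have := mem_cell.1 hxS B (hSH hBS)
      rw [if_pos hBS] at this
      exact ⟨hSH hBS, this⟩

theorem exists_lineMap_mem_cell_pos {φ : V →ᵃ[ℝ] ℝ} {z w : V} (hz : z ∈ cell g H S)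
    (hφz : φ z = 0) (hφw : φ w ≠ 0) :
    ∃ t : ℝ, AffineMap.lineMap z w t ∈ cell g H S ∧ 0 < φ (AffineMap.lineMap z w t) := by
  set ℓ : ℝ →ᵃ[ℝ] V := AffineMap.lineMap z w
  have hU : IsOpen (ℓ ⁻¹' cell g H S) := by
    rw [preimage_cell]
    exact isOpen_cell fun B _ => ((g B).comp ℓ).continuous_of_finiteDimensional
  have hval : ∀ t, φ (ℓ t) = t * φ w := fun t => by
    rw [AffineMap.apply_lineMap, hφz, AffineMap.lineMap_apply_module, smul_zero, zero_add,
      smul_eq_mul]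
  -- along `t = s * φ w` the value `φ (ℓ t) = s * (φ w) ^ 2` is positive for small `s > 0`
  have hpath : Filter.Tendsto (fun s : ℝ => s * φ w) (nhdsWithin 0 (Set.Ioi 0)) (nhds 0) := by
    simpa using ((continuous_mul_const (φ w)).tendsto 0).mono_left nhdsWithin_le_nhds
  obtain ⟨s, hs, hs0⟩ :=
    ((hpath.eventually (hU.mem_nhds (by simpa [ℓ] using hz))).and self_mem_nhdsWithin).exists
  exact ⟨s * φ w, hs, by rw [hval]; nlinarith [mul_self_pos.2 hφw, hs0]⟩

theorem Convex.exists_affineMap_eq_zero {s : Set V} (hs : Convex ℝ s) (φ : V →ᵃ[ℝ] ℝ) {x y : V}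
    (hx : x ∈ s) (hy : y ∈ s) (hφx : φ x ≤ 0) (hφy : 0 ≤ φ y) : ∃ z ∈ s, φ z = 0 := by
  have hc : ContinuousOn (fun t : ℝ => φ (AffineMap.lineMap x y t)) (Set.Icc 0 1) :=
    (φ.comp (AffineMap.lineMap x y)).continuous_of_finiteDimensional.continuousOn
  obtain ⟨t, ht, h0⟩ := intermediate_value_Icc zero_le_one hc (show (0 : ℝ) ∈ _ by simp [hφx, hφy])
  exact ⟨_, hs.lineMap_mem hx hy ht, h0⟩

end Cells

section SignVectors

variable {V ι : Type*} [AddCommGroup V] [Module ℝ V] {g : ι → V →ᵃ[ℝ] ℝ} {H : Finset ι}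
  {s t : Set V}

theorem mem_signVectors {S : Finset ι} :
    S ∈ signVectors g H s ↔ S ⊆ H ∧ (s ∩ cell g H S).Nonempty := by
  rw [signVectors, mem_filter, mem_powerset]

theorem signVectors_union : signVectors g H (s ∪ t) = signVectors g H s ∪ signVectors g H t := by
  simp only [signVectors, Set.union_inter_distrib_right, Set.union_nonempty, filter_or]

theorem card_signVectors_empty : #(signVectors g ∅ s) = if s.Nonempty then 1 else 0 := by
  simp only [signVectors, cell, notMem_empty, Set.iInter_of_empty, Set.iInter_univ,
    Set.inter_univ, powerset_empty]
  split_ifs <;> simp [*]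

theorem card_signVectors_insert {A : ι} (hA : A ∉ H) (s : Set V) :
    #(signVectors g (insert A H) s) =
      #(signVectors g H (s ∩ {x | g A x < 0})) + #(signVectors g H (s ∩ {x | 0 < g A x})) := by
  simp only [signVectors, card_filter, sum_powerset_insert hA]
  congr 1 <;> refine sum_congr rfl fun S hS => ?_
  · rw [cell_insert, if_neg fun h => hA (mem_powerset.1 hS h), ← Set.inter_assoc]
    rfl
  · rw [cell_insert, if_pos (mem_insert_self A S), ← Set.inter_assoc,
      cell_congr (S := insert A S) (T := S) fun B hB => by
        rw [mem_insert, or_iff_right (ne_of_mem_of_not_mem hB hA)]]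
    rfl

variable {A E : AffineSubspace ℝ V} {φ : V →ᵃ[ℝ] ℝ}

theorem signVectors_inf_subset_pos (hA : ∀ x, x ∈ A ↔ φ x = 0) (hEA : ¬E ≤ A) :
    signVectors g H (A ⊓ E : AffineSubspace ℝ V) ⊆ signVectors g H (E ∩ {x | 0 < φ x}) := by
  obtain ⟨w, hwE, hwA⟩ := SetLike.not_le_iff_exists.1 hEA
  intro S hS
  obtain ⟨hSH, z, ⟨hzA, hzE⟩, hz⟩ := mem_signVectors.1 hS
  obtain ⟨t, ht, hpos⟩ := exists_lineMap_mem_cell_pos hz ((hA z).1 hzA) (mt (hA w).2 hwA)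
  exact mem_signVectors.2 ⟨hSH, _, ⟨AffineMap.lineMap_mem t hzE hwE, hpos⟩, ht⟩

theorem signVectors_inf_subset_neg (hA : ∀ x, x ∈ A ↔ φ x = 0) (hEA : ¬E ≤ A) :
    signVectors g H (A ⊓ E : AffineSubspace ℝ V) ⊆ signVectors g H (E ∩ {x | φ x < 0}) := by
  simpa using signVectors_inf_subset_pos (g := g) (H := H) (φ := -φ) (by simpa using hA) hEA

theorem signVectors_pos_inter_neg (hA : ∀ x, x ∈ A ↔ φ x = 0) (hEA : ¬E ≤ A) :
    signVectors g H (E ∩ {x | 0 < φ x}) ∩ signVectors g H (E ∩ {x | φ x < 0}) =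
      signVectors g H (A ⊓ E : AffineSubspace ℝ V) := by
  refine subset_antisymm (fun S hS => ?_)
    (subset_inter (signVectors_inf_subset_pos hA hEA) (signVectors_inf_subset_neg hA hEA))
  obtain ⟨hS₁, hS₂⟩ := mem_inter.1 hS
  obtain ⟨hSH, x, ⟨hxE, hx⟩, hxS⟩ := mem_signVectors.1 hS₁
  obtain ⟨-, y, ⟨hyE, hy⟩, hyS⟩ := mem_signVectors.1 hS₂
  obtain ⟨z, ⟨hzE, hzS⟩, hz⟩ :=
    (E.convex.inter convex_cell).exists_affineMap_eq_zero φ ⟨hyE, hyS⟩ ⟨hxE, hxS⟩ hy.le hx.le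
  exact mem_signVectors.2 ⟨hSH, z, ⟨(hA z).2 hz, hzE⟩, hzS⟩

theorem signVectors_pos_union_neg (hA : ∀ x, x ∈ A ↔ φ x = 0) (hEA : ¬E ≤ A) :
    signVectors g H (E ∩ {x | 0 < φ x}) ∪ signVectors g H (E ∩ {x | φ x < 0}) =
      signVectors g H E := by
  have hE : (E : Set V) =
      ((E : Set V) ∩ {x | 0 < φ x}) ∪ (A ⊓ E : AffineSubspace ℝ V) ∪ (E ∩ {x | φ x < 0}) := by
    ext x
    simp only [Set.mem_union, Set.mem_inter_iff, Set.mem_ofPred_eq, SetLike.mem_coe,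
      AffineSubspace.mem_inf_iff, hA]
    grind
  conv_rhs => rw [hE, signVectors_union, signVectors_union,
    union_eq_left.2 (signVectors_inf_subset_pos hA hEA)]

end SignVectors

section DeletionRestriction

variable {V : Type*} [AddCommGroup V] [Module ℝ V]

theorem finrank_direction_inf_add_one [FiniteDimensional ℝ V] {A E : AffineSubspace ℝ V}
    {φ : V →ᵃ[ℝ] ℝ} (hA : ∀ x, x ∈ A ↔ φ x = 0) (hEA : ¬E ≤ A) {z : V} (hz : z ∈ A ⊓ E) :
    finrank ℝ (A ⊓ E).direction + 1 = finrank ℝ E.direction := by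
  obtain ⟨hzA, hzE⟩ := hz
  have hdir : A.direction = LinearMap.ker φ.linear := by
    ext v
    rw [← AffineSubspace.vadd_mem_iff_mem_direction v hzA, hA, LinearMap.mem_ker,
      AffineMap.map_vadd, (hA z).1 hzA, vadd_eq_add, add_zero]
  obtain ⟨w, hwE, hwA⟩ := SetLike.not_le_iff_exists.1 hEA
  have hwz : w -ᵥ z ∉ A.direction := fun h =>
    hwA ((AffineSubspace.vsub_right_mem_direction_iff_mem hzA w).1 h)
  have hφ : φ.linear ≠ 0 := fun h => hwz (by rw [hdir, h]; exact LinearMap.mem_ker.2 rfl)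
  have hsup : A.direction ⊔ E.direction = ⊤ := by
    have hcoatom : IsCoatom A.direction :=
      hdir ▸ LinearMap.isCoatom_ker_of_surjective (LinearMap.range_eq_top.1
        (Module.Dual.range_eq_top_of_ne_zero hφ))
    exact hcoatom.lt_iff.1 (left_lt_sup.2 fun h =>
      hwz (h (AffineSubspace.vsub_mem_direction hwE hzE)))
  have hdim := Submodule.finrank_sup_add_finrank_inf_eq A.direction E.direction
  rw [hsup, finrank_top, ← AffineSubspace.direction_inf_of_mem_inf ⟨hzA, hzE⟩] at hdim
  have hker := Module.Dual.finrank_ker_add_one_of_ne_zero hφ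
  rw [← hdir] at hker
  omega

variable {g : AffineSubspace ℝ V → V →ᵃ[ℝ] ℝ} {H : Finset (AffineSubspace ℝ V)}
  {A E : AffineSubspace ℝ V}

theorem signVectors_insert_of_le (hA : ∀ x, x ∈ A ↔ g A x = 0) (hEA : E ≤ A) :
    signVectors g (insert A H) E = ∅ := by
  refine eq_empty_of_forall_notMem fun S hS => ?_
  obtain ⟨-, x, hxE, hx⟩ := mem_signVectors.1 hS
  exact ne_zero_of_mem_cell hx (mem_insert_self A H) ((hA x).1 (hEA hxE))

theorem card_signVectors_insert_of_not_le (hA : ∀ x, x ∈ A ↔ g A x = 0) (hAH : A ∉ H)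
    (hEA : ¬E ≤ A) :
    #(signVectors g (insert A H) E) =
      #(signVectors g H E) + #(signVectors g H (A ⊓ E : AffineSubspace ℝ V)) := by
  rw [card_signVectors_insert hAH, add_comm, ← card_union_add_card_inter,
    signVectors_pos_union_neg hA hEA, signVectors_pos_inter_neg hA hEA]

noncomputable def dimSign (F : AffineSubspace ℝ V) : ℤ :=
  if (F : Set V).Nonempty then (-1) ^ finrank ℝ F.direction else 0

noncomputable def whitneySum (H : Finset (AffineSubspace ℝ V)) (E : AffineSubspace ℝ V) : ℤ :=
  ∑ S ∈ H.powerset, (-1) ^ #S * dimSign (S.inf id ⊓ E)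

theorem whitneySum_empty : whitneySum ∅ E = dimSign E := by
  simp [whitneySum]

theorem whitneySum_insert (hA : A ∉ H) (E : AffineSubspace ℝ V) :
    whitneySum (insert A H) E = whitneySum H E - whitneySum H (A ⊓ E) := by
  rw [whitneySum, sum_powerset_insert hA, sub_eq_add_neg, whitneySum, whitneySum,
    ← sum_neg_distrib]
  congr 1
  refine sum_congr rfl fun S hS => ?_
  rw [card_insert_of_notMem fun h => hA (mem_powerset.1 hS h), inf_insert, id, inf_comm A,
    inf_assoc, pow_succ]
  ring

theorem neg_one_pow_finrank_mul_card_signVectors [FiniteDimensional ℝ V]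
    (hg : ∀ B ∈ H, ∀ x, x ∈ B ↔ g B x = 0) (E : AffineSubspace ℝ V) :
    (-1) ^ finrank ℝ E.direction * (#(signVectors g H E) : ℤ) = whitneySum H E := by
  induction H using Finset.induction_on generalizing E with
  | empty =>
    rw [card_signVectors_empty, whitneySum_empty, dimSign]
    split_ifs <;> simp
  | insert A H hAH ih =>
    have hA := hg A (mem_insert_self A H)
    have ih := ih fun B hB => hg B (mem_insert_of_mem hB)
    rw [whitneySum_insert hAH]
    by_cases hEA : E ≤ A
    · rw [signVectors_insert_of_le hA hEA, inf_eq_right.2 hEA]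
      simp
    rw [card_signVectors_insert_of_not_le hA hAH hEA, Nat.cast_add, mul_add, ih, ← ih (A ⊓ E),
      sub_eq_add_neg, ← neg_mul]
    congr 1
    obtain hempty | ⟨S, hS⟩ := (signVectors g H (A ⊓ E : AffineSubspace ℝ V)).eq_empty_or_nonempty
    · simp [hempty]
    obtain ⟨-, z, hz, -⟩ := mem_signVectors.1 hS
    rw [← finrank_direction_inf_add_one hA hEA hz, pow_succ]
    ring

theorem sum_flatsOf_mobius_mul_eq_whitneySum (hH : ⊤ ∉ H) {μ : AffineSubspace ℝ V → ℤ}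
    (hμtop : μ ⊤ = 1)
    (hμ : ∀ F ∈ flatsOf H (fun F => (F : Set V).Nonempty), F ≠ ⊤ →
      μ F = -∑ G ∈ flatsOf H (fun F => (F : Set V).Nonempty) with F < G, μ G) :
    ∑ F ∈ flatsOf H (fun F => (F : Set V).Nonempty), μ F * (-1) ^ finrank ℝ F.direction =
      whitneySum H ⊤ := by
  have hp : Monotone fun F : AffineSubspace ℝ V => (F : Set V).Nonempty :=
    fun _ _ hFG hF => hF.mono hFG
  calc _ = ∑ F ∈ flatsOf H (fun F => (F : Set V).Nonempty), whitneyMobius H F * dimSign F :=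
        sum_congr rfl fun F hF => by
          rw [eqOn_whitneyMobius hp hH hμtop hμ hF, dimSign, if_pos (mem_filter.1 hF).2]
    _ = whitneySum H ⊤ := by
      rw [sum_flatsOf_whitneyMobius_mul fun F hF => by rw [dimSign, if_neg hF], whitneySum]
      simp only [inf_top_eq]

end DeletionRestriction

noncomputable def IsLocallyConstant.connectedComponentsEquivRange {X β : Type*}
    [TopologicalSpace X] {σ : X → β} (hσ : IsLocallyConstant σ)
    (hconn : ∀ x, IsPreconnected (σ ⁻¹' {σ x})) : ConnectedComponents X ≃ Set.range σ :=
  have hcc : ∀ x, connectedComponent x = σ ⁻¹' {σ x} := fun x =>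
    Set.Subset.antisymm
      (fun _ hy => hσ.apply_eq_of_isPreconnected isPreconnected_connectedComponent hy
        mem_connectedComponent)
      ((hconn x).subset_connectedComponent rfl)
  (Quotient.congrRight fun x y => by
    change connectedComponent x = connectedComponent y ↔ σ x = σ y
    rw [hcc, hcc]
    exact ⟨fun h => (show y ∈ σ ⁻¹' {σ x} from h ▸ rfl).symm, fun h => by rw [h]⟩).trans
    (Setoid.quotientKerEquivRange σ)

section Regions

variable {V : Type*}

section

variable [AddCommGroup V] [Module ℝ V] {g : AffineSubspace ℝ V → V →ᵃ[ℝ] ℝ}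
  {H : Finset (AffineSubspace ℝ V)}

theorem cell_subset_range_val (hg : ∀ B ∈ H, ∀ x, x ∈ B ↔ g B x = 0) (S : Finset _) :
    cell g H S ⊆ Set.range (Subtype.val : {x : V // ∀ B ∈ H, x ∉ B} → V) :=
  fun x hx => ⟨⟨x, fun B hB hxB => ne_zero_of_mem_cell hx hB ((hg B hB x).1 hxB)⟩, rfl⟩

theorem signVector_eq_iff_mem_cell (hg : ∀ B ∈ H, ∀ x, x ∈ B ↔ g B x = 0)
    (x : {x : V // ∀ B ∈ H, x ∉ B}) {S : Finset _} :
    signVector g H x = S ↔ S ⊆ H ∧ (x : V) ∈ cell g H S :=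
  signVector_eq_iff fun B hB h => x.2 B hB ((hg B hB x).2 h)

theorem range_signVector (hg : ∀ B ∈ H, ∀ x, x ∈ B ↔ g B x = 0) :
    Set.range (fun x : {x : V // ∀ B ∈ H, x ∉ B} => signVector g H x) =
      signVectors g H Set.univ := by
  ext S
  simp only [Set.mem_range, mem_coe, mem_signVectors, Set.univ_inter]
  constructor
  · rintro ⟨x, rfl⟩
    exact ⟨filter_subset _ _, x, ((signVector_eq_iff_mem_cell hg x).1 rfl).2⟩
  · rintro ⟨hSH, x, hx⟩
    obtain ⟨y, rfl⟩ := cell_subset_range_val hg S hx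
    exact ⟨y, (signVector_eq_iff_mem_cell hg y).2 ⟨hSH, hx⟩⟩

end

variable [NormedAddCommGroup V] [NormedSpace ℝ V] [FiniteDimensional ℝ V]
  {g : AffineSubspace ℝ V → V →ᵃ[ℝ] ℝ} {H : Finset (AffineSubspace ℝ V)}

noncomputable def connectedComponentsEquivSignVectors (hg : ∀ B ∈ H, ∀ x, x ∈ B ↔ g B x = 0) :
    ConnectedComponents {x : V // ∀ B ∈ H, x ∉ B} ≃ signVectors g H Set.univ :=
  have hfiber : ∀ x : {x : V // ∀ B ∈ H, x ∉ B},
      (fun y : {x : V // ∀ B ∈ H, x ∉ B} => signVector g H y) ⁻¹' {signVector g H x} =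
        Subtype.val ⁻¹' cell g H (signVector g H x) := fun x =>
    Set.ext fun y => (signVector_eq_iff_mem_cell hg y).trans (and_iff_right (filter_subset _ _))
  have hσ : IsLocallyConstant fun y : {x : V // ∀ B ∈ H, x ∉ B} => signVector g H y :=
    (IsLocallyConstant.iff_eventually_eq _).2 fun x =>
      (hfiber x ▸ (isOpen_cell fun B _ => (g B).continuous_of_finiteDimensional).preimage
        continuous_subtype_val).mem_nhds rfl
  have hconn : ∀ x : {x : V // ∀ B ∈ H, x ∉ B}, IsPreconnected
      ((fun y : {x : V // ∀ B ∈ H, x ∉ B} => signVector g H y) ⁻¹' {signVector g H x}) :=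
    fun x => by
      rw [hfiber, ← Topology.IsEmbedding.subtypeVal.isInducing.isPreconnected_image,
        Set.image_preimage_eq_of_subset (cell_subset_range_val hg _)]
      exact convex_cell.isPreconnected
  (hσ.connectedComponentsEquivRange hconn).trans (Equiv.setCongr (range_signVector hg))

end Regions

section Coordinates

variable {ι : Type*} [Fintype ι] {A : AffineSubspace ℝ (ι → ℝ)} {a : ι → ℝ} {b : ℝ}

theorem exists_affineMap_mem_iff_eq_zero (hA : (A : Set (ι → ℝ)) = {x | ∑ i, a i * x i = b}) :
    ∃ φ : (ι → ℝ) →ᵃ[ℝ] ℝ, ∀ x, x ∈ A ↔ φ x = 0 :=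
  ⟨(dotProductEquiv ℝ ι a).toAffineMap - AffineMap.const ℝ _ b, fun x => by
    rw [← SetLike.mem_coe, hA]
    simp [dotProduct, sub_eq_zero]⟩

theorem ne_top_of_coe_eq_setOf (ha : a ≠ 0) (hA : (A : Set (ι → ℝ)) = {x | ∑ i, a i * x i = b}) :
    A ≠ ⊤ := by
  rintro rfl
  rw [AffineSubspace.top_coe] at hA
  have hall : ∀ x : ι → ℝ, ∑ i, a i * x i = b := fun x => (Set.ext_iff.1 hA x).1 trivial
  have hb : b = 0 := by simpa using (hall 0).symm
  exact ha (dotProduct_self_eq_zero.1 ((hall a).trans hb))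

end Coordinates

theorem flats_eq_flatsOf (d : ℕ) (H : Finset (AffineSubspace ℝ (Fin d → ℝ))) :
    flats d H = flatsOf H (fun F => (F : Set (Fin d → ℝ)).Nonempty) :=
  rfl

/-- **Zaslavsky's theorem.** The number of regions of a hyperplane arrangement `H` in `ℝ^d`
is finite and equals `(-1)^d * h_H(-1)`, where `h_H` is the characteristic polynomial of `H`,
defined via the Möbius function `μ` of the poset of flats (ordered by reverse inclusion). -/
theorem zaslavsky (d : ℕ) (H : Finset (AffineSubspace ℝ (Fin d → ℝ)))
    (hH : ∀ A ∈ H, ∃ (a : Fin d → ℝ) (b : ℝ), a ≠ 0 ∧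
      (A : Set (Fin d → ℝ)) = {x | ∑ i, a i * x i = b})
    (μ : AffineSubspace ℝ (Fin d → ℝ) → ℤ)
    (hμtop : μ ⊤ = 1)
    (hμ : ∀ F ∈ flats d H, F ≠ ⊤ →
      μ F = -∑ G ∈ (flats d H).filter (fun G => F < G), μ G) :
    Finite (ConnectedComponents {x : Fin d → ℝ // ∀ A ∈ H, x ∉ A}) ∧
    (Nat.card (ConnectedComponents {x : Fin d → ℝ // ∀ A ∈ H, x ∉ A}) : ℤ)
      = (-1) ^ d * ∑ F ∈ flats d H, μ F * (-1) ^ (Module.finrank ℝ F.direction) := by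
  have hφ : ∀ A ∈ H, ∃ φ : (Fin d → ℝ) →ᵃ[ℝ] ℝ, ∀ x, x ∈ A ↔ φ x = 0 := fun A hA => by
    obtain ⟨a, b, -, hA⟩ := hH A hA
    exact exists_affineMap_mem_iff_eq_zero hA
  choose! g hg using hφ
  have htop : ⊤ ∉ H := fun h => by
    obtain ⟨a, b, ha, hA⟩ := hH ⊤ h
    exact ne_top_of_coe_eq_setOf ha hA rfl
  let e := connectedComponentsEquivSignVectors hg
  refine ⟨Finite.of_equiv _ e.symm, ?_⟩
  have hcount := neg_one_pow_finrank_mul_card_signVectors hg ⊤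
  rw [AffineSubspace.direction_top, finrank_top, finrank_fin_fun, AffineSubspace.top_coe] at hcount
  rw [flats_eq_flatsOf] at hμ
  rw [Nat.card_congr e, Nat.card_eq_finsetCard, flats_eq_flatsOf,
    sum_flatsOf_mobius_mul_eq_whitneySum htop hμtop hμ, ← hcount, ← mul_assoc, ← pow_add,
    Even.neg_one_pow ⟨d, rfl⟩, one_mul]
end

section
/- Let G = (V,E) be a finite simple graph. There exists a polynomial c_G with integer coefficients such that for every positive integer t, c_G(t) equals the number of proper t-colorings of G; moreover, for every positive integer t, (−1)^{|V|} · c_G(−t) equals the number of pairs (x, σ) where x : V → {1,…,t} is a (not necessarily proper) t-coloring and σ is an acyclic orientation of G compatible with x. -/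
/-- `o` is an orientation of the simple graph `G`: it directs each edge of `G` in exactly
one of the two possible ways, and directs nothing else. -/
def IsOrientationOf {V : Type*} (G : SimpleGraph V) (o : V → V → Prop) : Prop :=
  (∀ i j, o i j → G.Adj i j) ∧ (∀ i j, G.Adj i j → (o i j ↔ ¬ o j i))

/-- An orientation is acyclic if it has no directed cycle, i.e. its transitive closure is
irreflexive. -/
def IsAcyclicOrientation {V : Type*} (G : SimpleGraph V) (o : V → V → Prop) : Prop :=
  IsOrientationOf G o ∧ ∀ i, ¬ Relation.TransGen o i i


/-!
Deletion–contraction. Fix an edge `ab` of `G`, let `G - ab` be `G` without it and `G / ab` the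
graph obtained from `G - ab` by identifying `a` with `b`. A proper colouring of `G - ab` is a
proper colouring of `G` if `x a ≠ x b` and one of `G / ab` if `x a = x b`, so
`c_G = c_{G - ab} - c_{G / ab}`.

For the pairs `(x, σ)`, restricting `σ` to `G - ab` is a bijection from the pairs of `G` with
`a → b` to the pairs `(x, σ')` of `G - ab` with `x a ≤ x b` and no directed `σ'`-path from `b`
to `a`. At least one of the two directions of `ab` is always admissible in this sense, and both
are exactly when `x a = x b` and no directed path joins `a` and `b`; these pairs correspond to
the pairs of `G / ab`. Hence the pair counts satisfy `P_G = P_{G - ab} + P_{G / ab}`, the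
recurrence that `(-1)^|V| c_G(-t)` satisfies because `G / ab` has one vertex fewer than `G`.
Both claims then follow by induction on the number of edges, the edgeless graph having `t^|V|`
of each.
-/

open Function Relation

namespace IsOrientationOf

variable {V W : Type*} {G H : SimpleGraph V} {σ : V → V → Prop} {i j : V}

theorem asymm (hσ : IsOrientationOf G σ) (h : σ i j) : ¬ σ j i :=
  (hσ.2 i j (hσ.1 i j h)).mp h

theorem inf_adj (hσ : IsOrientationOf G σ) (hHG : H ≤ G) : IsOrientationOf H (σ ⊓ H.Adj) :=
  ⟨fun _ _ h => h.2, fun i j hij => by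
    simp only [Pi.inf_apply, inf_Prop_eq, hij, hij.symm, and_true]
    exact hσ.2 i j (hHG hij)⟩

theorem comap {f : V → W} {o : W → W → Prop} (ho : IsOrientationOf (H.map f) o)
    (hf : ∀ i j, H.Adj i j → f i ≠ f j) : IsOrientationOf H ((o on f) ⊓ H.Adj) :=
  ⟨fun _ _ h => h.2, fun i j hij => by
    simp only [Pi.inf_apply, inf_Prop_eq, hij, hij.symm, and_true]
    exact ho.2 _ _ ⟨hf i j hij, i, j, hij, rfl, rfl⟩⟩

theorem map {f : V → W} (hσ : IsOrientationOf H σ)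
    (hacyc : ∀ w, ¬ TransGen (Relation.Map σ f f) w w) :
    IsOrientationOf (H.map f) (Relation.Map σ f f) := by
  have hasymm {w w'} (h : Relation.Map σ f f w w') (h' : Relation.Map σ f f w' w) : False :=
    hacyc w ((TransGen.single h).tail h')
  refine ⟨fun w w' h => ⟨?_, ?_⟩, fun w w' h => ⟨hasymm, fun h' => ?_⟩⟩
  · rintro rfl
    exact hasymm h h
  · obtain ⟨i, j, hij, rfl, rfl⟩ := h
    exact ⟨i, j, hσ.1 i j hij, rfl, rfl⟩
  · obtain ⟨-, i, j, hij, rfl, rfl⟩ := h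
    by_cases hσij : σ i j
    · exact ⟨i, j, hσij, rfl, rfl⟩
    · exact absurd ⟨j, i, (hσ.2 j i hij.symm).mpr hσij, rfl, rfl⟩ h'

theorem comap_map_inf_adj {f : V → W} (hσ : IsOrientationOf H σ)
    (hacyc : ∀ w, ¬ TransGen (Relation.Map σ f f) w w) :
    (Relation.Map σ f f on f) ⊓ H.Adj = σ := by
  ext i j
  refine ⟨fun ⟨hm, hij⟩ => ?_, fun h => ⟨⟨i, j, h, rfl, rfl⟩, hσ.1 i j h⟩⟩
  by_contra h
  exact (hσ.map hacyc).asymm hm ⟨j, i, (hσ.2 j i hij.symm).mpr h, rfl, rfl⟩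

theorem map_comap_inf_adj {f : V → W} {o : W → W → Prop} (ho : IsOrientationOf (H.map f) o) :
    Relation.Map ((o on f) ⊓ H.Adj) f f = o := by
  ext w w'
  refine ⟨fun ⟨i, j, ⟨h, _⟩, hi, hj⟩ => hi ▸ hj ▸ h, fun h => ?_⟩
  obtain ⟨-, i, j, hij, rfl, rfl⟩ := ho.1 w w' h
  exact ⟨i, j, ⟨h, hij⟩, rfl, rfl⟩

end IsOrientationOf

namespace ChromaticReciprocity

variable {V W : Type*}

theorem card_subtype_or_add_card_subtype_and {α : Type*} [Finite α] (p q : α → Prop) :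
    Nat.card {x // p x ∨ q x} + Nat.card {x // p x ∧ q x} =
      Nat.card {x // p x} + Nat.card {x // q x} := by
  have h := Set.ncard_union_add_ncard_inter {x | p x} {x | q x}
  simp only [← Nat.card_coe_set_eq] at h
  exact h

section Relations

variable {r : V → V → Prop} {a b i j : V}

theorem le_of_reflTransGen {α : Type*} [Preorder α] {f : V → α}
    (hf : ∀ i j, r i j → f i ≤ f j) (h : ReflTransGen r i j) : f i ≤ f j := by
  simpa [reflTransGen_eq_self] using h.lift f hf

def arc (a b : V) : V → V → Prop := fun i j => i = a ∧ j = b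

theorem transGen_sup_arc (h : TransGen (r ⊔ arc a b) i j) :
    TransGen r i j ∨ ReflTransGen r i a ∧ ReflTransGen r b j := by
  induction h with
  | single h =>
    rcases h with h | ⟨rfl, rfl⟩
    · exact .inl (.single h)
    · exact .inr ⟨.refl, .refl⟩
  | tail _ h ih =>
    rcases h with h | ⟨rfl, rfl⟩
    · rcases ih with ih | ⟨ih₁, ih₂⟩
      · exact .inl (ih.tail h)
      · exact .inr ⟨ih₁, ih₂.tail h⟩
    · rcases ih with ih | ⟨ih₁, -⟩
      · exact .inr ⟨ih.to_reflTransGen, .refl⟩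
      · exact .inr ⟨ih₁, .refl⟩

theorem acyclic_sup_arc (hr : ∀ i, ¬ TransGen r i i) (hba : ¬ ReflTransGen r b a) :
    ∀ i, ¬ TransGen (r ⊔ arc a b) i i := fun i h =>
  (transGen_sup_arc h).elim (hr i) fun ⟨hia, hbi⟩ => hba (hbi.trans hia)

theorem le_and_not_transGen_or {α : Type*} [LinearOrder α] {f : V → α}
    (hf : ∀ i j, r i j → f i ≤ f j) (hr : ∀ i, ¬ TransGen r i i) (a b : V) :
    f a ≤ f b ∧ ¬ TransGen r b a ∨ f b ≤ f a ∧ ¬ TransGen r a b := by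
  by_cases hba : TransGen r b a
  · exact .inr ⟨le_of_reflTransGen hf hba.to_reflTransGen, fun hab => hr a (hab.trans hba)⟩
  by_cases hab : TransGen r a b
  · exact .inl ⟨le_of_reflTransGen hf hab.to_reflTransGen, hba⟩
  exact (le_total (f a) (f b)).imp (⟨·, hba⟩) (⟨·, hab⟩)

theorem not_transGen_inf_onFun {f : V → W} {o : W → W → Prop} (ho : ∀ w, ¬ TransGen o w w)
    (s : V → V → Prop) (hij : f i = f j) : ¬ TransGen ((o on f) ⊓ s) i j := fun h => by
  have h' : TransGen o (f i) (f j) := h.lift f fun _ _ h => h.1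
  exact ho (f j) (hij ▸ h')

end Relations

abbrev ProperColoring (G : SimpleGraph V) (t : ℕ) :=
  {x : V → Fin t // ∀ i j, G.Adj i j → x i ≠ x j}

abbrev CompatiblePair (G : SimpleGraph V) (t : ℕ) :=
  {p : (V → Fin t) × (V → V → Prop) //
    IsAcyclicOrientation G p.2 ∧ ∀ i j, p.2 i j → p.1 i ≤ p.1 j}

section Deletion

variable {G : SimpleGraph V} {σ : V → V → Prop} {a b : V} {t : ℕ}

theorem isOrientationOf_sup_arc (hab : G.Adj a b)
    (hσ : IsOrientationOf (G.deleteEdges {s(a, b)}) σ) : IsOrientationOf G (σ ⊔ arc a b) := by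
  have hσG i j (h : σ i j) : G.Adj i j ∧ s(i, j) ≠ s(a, b) := by
    simpa using hσ.1 i j h
  refine ⟨fun i j h => h.elim (fun h => (hσG i j h).1) fun ⟨hi, hj⟩ => hi ▸ hj ▸ hab,
    fun i j hij => ?_⟩
  by_cases he : s(i, j) = s(a, b)
  · have hab' : ¬ σ a b := fun h => (hσG a b h).2 rfl
    have hba' : ¬ σ b a := fun h => (hσG b a h).2 Sym2.eq_swap
    rcases Sym2.eq_iff.mp he with ⟨rfl, rfl⟩ | ⟨rfl, rfl⟩ <;> simp [arc, hab', hba', hij.ne]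
  · have hij' : ¬ arc a b i j := fun ⟨hi, hj⟩ => he (hi ▸ hj ▸ rfl)
    have hji' : ¬ arc a b j i := fun ⟨hj, hi⟩ => he (hi ▸ hj ▸ Sym2.eq_swap)
    simpa [hij', hji'] using hσ.2 i j (by simp [hij, he])

theorem sup_arc_inf_adj (hσ : ∀ i j, σ i j → (G.deleteEdges {s(a, b)}).Adj i j) :
    (σ ⊔ arc a b) ⊓ (G.deleteEdges {s(a, b)}).Adj = σ := by
  ext i j
  refine ⟨fun ⟨h, hij⟩ => h.resolve_right ?_, fun h => ⟨.inl h, hσ i j h⟩⟩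
  rintro ⟨rfl, rfl⟩
  simp at hij

theorem inf_adj_sup_arc (hσ : IsOrientationOf G σ) (hab : σ a b) :
    σ ⊓ (G.deleteEdges {s(a, b)}).Adj ⊔ arc a b = σ := by
  ext i j
  refine ⟨fun h => h.elim And.left fun ⟨hi, hj⟩ => hi ▸ hj ▸ hab, fun h => ?_⟩
  by_cases he : s(i, j) = s(a, b)
  · rcases Sym2.eq_iff.mp he with ⟨rfl, rfl⟩ | ⟨rfl, rfl⟩
    · exact .inr ⟨rfl, rfl⟩
    · exact absurd h (hσ.asymm hab)
  · exact .inl ⟨h, by simpa [he] using hσ.1 i j h⟩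

def properColoringNeEquiv (hab : G.Adj a b) :
    {x : ProperColoring (G.deleteEdges {s(a, b)}) t // x.1 a ≠ x.1 b} ≃ ProperColoring G t where
  toFun x := ⟨x.1.1, fun i j hij => by
    by_cases he : s(i, j) = s(a, b)
    · rcases Sym2.eq_iff.mp he with ⟨rfl, rfl⟩ | ⟨rfl, rfl⟩
      exacts [x.2, x.2.symm]
    · exact x.1.2 i j (by simp [hij, he])⟩
  invFun y := ⟨⟨y.1, fun i j h => y.2 i j (G.deleteEdges_le _ h)⟩, y.2 a b hab⟩
  left_inv _ := rfl
  right_inv _ := rfl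

def compatiblePairArcEquiv (hab : G.Adj a b) :
    {p : CompatiblePair G t // p.1.2 a b} ≃
      {q : CompatiblePair (G.deleteEdges {s(a, b)}) t //
        q.1.1 a ≤ q.1.1 b ∧ ¬ TransGen q.1.2 b a} where
  toFun p := ⟨⟨(p.1.1.1, p.1.1.2 ⊓ (G.deleteEdges {s(a, b)}).Adj),
      ⟨p.1.2.1.1.inf_adj (G.deleteEdges_le _),
        fun i h => p.1.2.1.2 i (TransGen.mono (fun _ _ h => h.1) _ _ h)⟩,
      fun i j h => p.1.2.2 i j h.1⟩,
    p.1.2.2 a b p.2, fun h => p.1.2.1.2 b ((TransGen.mono (fun _ _ h => h.1) _ _ h).tail p.2)⟩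
  invFun q := ⟨⟨(q.1.1.1, q.1.1.2 ⊔ arc a b),
      ⟨isOrientationOf_sup_arc hab q.1.2.1.1,
        acyclic_sup_arc q.1.2.1.2 fun h => q.2.2 <|
          (reflTransGen_iff_eq_or_transGen.mp h).resolve_left hab.ne⟩,
      fun i j h => h.elim (q.1.2.2 i j) (by rintro ⟨rfl, rfl⟩; exact q.2.1)⟩,
    .inr ⟨rfl, rfl⟩⟩
  left_inv p := Subtype.ext <| Subtype.ext <| Prod.ext rfl <| inf_adj_sup_arc p.1.2.1.1 p.2
  right_inv q := Subtype.ext <| Subtype.ext <| Prod.ext rfl <| sup_arc_inf_adj q.1.2.1.1.1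

theorem card_compatiblePair_eq_deleteEdges_add [Finite V] (hab : G.Adj a b) :
    Nat.card (CompatiblePair G t) = Nat.card (CompatiblePair (G.deleteEdges {s(a, b)}) t) +
      Nat.card {q : CompatiblePair (G.deleteEdges {s(a, b)}) t //
        q.1.1 a = q.1.1 b ∧ ¬ TransGen q.1.2 a b ∧ ¬ TransGen q.1.2 b a} := by
  classical
  rw [← Nat.card_congr (Equiv.sumCompl fun p : CompatiblePair G t => p.1.2 a b), Nat.card_sum,
    Nat.card_congr (Equiv.subtypeEquivRight (p := fun p : CompatiblePair G t => ¬ p.1.2 a b)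
      fun p => (p.2.1.1.2 b a hab.symm).symm),
    Nat.card_congr (compatiblePairArcEquiv hab), Nat.card_congr (compatiblePairArcEquiv hab.symm),
    @Sym2.eq_swap _ b a, ← card_subtype_or_add_card_subtype_and,
    Nat.card_congr (Equiv.subtypeUnivEquiv fun q => le_and_not_transGen_or q.2.2 q.2.1.2 a b)]
  exact congrArg _ <| Nat.card_congr <| Equiv.subtypeEquivRight fun q => by
    rw [le_antisymm_iff]
    tauto

end Deletion

section Merge

/-- For `¬ H.Adj a b`, `H.map (Quotient.mk (mergeSetoid a b))` is the graph obtained from `H` by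
merging `a` and `b`. -/
def mergeSetoid (a b : V) : Setoid V where
  r i j := i = j ∨ s(i, j) = s(a, b)
  iseqv.refl _ := .inl rfl
  iseqv.symm h := h.imp Eq.symm (Sym2.eq_swap.trans ·)
  iseqv.trans := by
    rintro i j k (rfl | hij) (rfl | hjk)
    · exact .inl rfl
    · exact .inr hjk
    · exact .inr hij
    · rcases Sym2.eq_iff.mp (hij.trans hjk.symm) with ⟨rfl, rfl⟩ | ⟨rfl, -⟩ <;>
        exact .inl rfl

variable {H : SimpleGraph V} {σ : V → V → Prop} {a b i j : V} {t : ℕ}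

local notation "π" => Quotient.mk (mergeSetoid a b)

theorem merge_mk_eq_mk_iff : π i = π j ↔ i = j ∨ s(i, j) = s(a, b) :=
  Quotient.eq

theorem merge_mk_left_eq_mk_right : π a = π b :=
  Quotient.sound (.inr rfl)

theorem merge_mk_ne_mk_of_adj (hab : ¬ H.Adj a b) (hij : H.Adj i j) : π i ≠ π j :=
  fun h => (merge_mk_eq_mk_iff.mp h).elim hij.ne fun he => hab <| by
    rcases Sym2.eq_iff.mp he with ⟨rfl, rfl⟩ | ⟨rfl, rfl⟩
    exacts [hij, hij.symm]

theorem card_eq_card_quotient_mergeSetoid_add_one [Finite V] (hab : a ≠ b) :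
    Nat.card V = Nat.card (Quotient (mergeSetoid a b)) + 1 := by
  classical
  have hinj : Injective fun i : {i // i ≠ b} => π i.1 := fun i j h =>
    Subtype.ext <| (merge_mk_eq_mk_iff.mp h).resolve_right fun he => by
      rcases Sym2.eq_iff.mp he with ⟨-, h⟩ | ⟨h, -⟩
      exacts [j.2 h, i.2 h]
  have hsurj : Surjective fun i : {i // i ≠ b} => π i.1 := by
    refine Quotient.ind fun k => ?_
    by_cases hk : k = b
    · exact ⟨⟨a, hab⟩, hk ▸ merge_mk_left_eq_mk_right⟩
    · exact ⟨⟨k, hk⟩, rfl⟩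
  rw [← Nat.card_congr (Equiv.optionSubtypeNe b), Finite.card_option,
    Nat.card_congr (Equiv.ofBijective _ ⟨hinj, hsurj⟩)]

def liftMerge {α : Type*} (x : V → α) (hx : x a = x b) : Quotient (mergeSetoid a b) → α :=
  Quotient.lift x fun i j h => by
    rcases h with rfl | he
    · rfl
    · rcases Sym2.eq_iff.mp he with ⟨rfl, rfl⟩ | ⟨rfl, rfl⟩
      exacts [hx, hx.symm]

theorem liftMerge_comp_mk {α : Type*} (w : Quotient (mergeSetoid a b) → α) :
    liftMerge (w ∘ π) (congrArg w merge_mk_left_eq_mk_right) = w :=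
  funext <| Quotient.ind fun _ => rfl

/-- A path of the merged relation lifts to a `σ`-path, or to two `σ`-paths joined at the merged
vertex: one ending at `a` and one starting at `b`, or vice versa. Two such junctions would give
a `σ`-path between `a` and `b`. -/
theorem transGen_map_mk (hσ : ∀ i, ¬ TransGen σ i i) (hab : ¬ TransGen σ a b)
    (hba : ¬ TransGen σ b a) {w w' : Quotient (mergeSetoid a b)}
    (h : TransGen (Relation.Map σ π π) w w') :
    ∃ i j, π i = w ∧ π j = w' ∧
      (TransGen σ i j ∨ ReflTransGen σ i a ∧ TransGen σ b j ∨
        ReflTransGen σ i b ∧ TransGen σ a j) := by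
  induction h with
  | single h =>
    obtain ⟨i, j, hij, rfl, rfl⟩ := h
    exact ⟨i, j, rfl, rfl, .inl (.single hij)⟩
  | tail _ h ih =>
    obtain ⟨i, j, rfl, hj, hij⟩ := ih
    obtain ⟨p, q, hpq, hp, rfl⟩ := h
    refine ⟨i, q, rfl, rfl, ?_⟩
    rcases merge_mk_eq_mk_iff.mp (hp.trans hj.symm) with rfl | he
    · exact hij.imp (·.tail hpq) <|
        Or.imp (And.imp_right (·.tail hpq)) (And.imp_right (·.tail hpq))
    rcases Sym2.eq_iff.mp he with ⟨rfl, rfl⟩ | ⟨rfl, rfl⟩ <;>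
      rcases hij with hij | ⟨-, hij⟩ | ⟨-, hij⟩
    · exact .inr (.inr ⟨hij.to_reflTransGen, .single hpq⟩)
    · exact absurd hij (hσ _)
    · exact absurd hij hab
    · exact .inr (.inl ⟨hij.to_reflTransGen, .single hpq⟩)
    · exact absurd hij hba
    · exact absurd hij (hσ _)

theorem acyclic_map_mk (hσ : ∀ i, ¬ TransGen σ i i) (hab : ¬ TransGen σ a b)
    (hba : ¬ TransGen σ b a) : ∀ w, ¬ TransGen (Relation.Map σ π π) w w := by
  intro w h
  obtain ⟨i, j, hi, hj, hij⟩ := transGen_map_mk hσ hab hba h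
  rcases merge_mk_eq_mk_iff.mp (hi.trans hj.symm) with rfl | he
  · rcases hij with h | ⟨h₁, h₂⟩ | ⟨h₁, h₂⟩
    exacts [hσ i h, hba (h₂.trans_left h₁), hab (h₂.trans_left h₁)]
  rcases Sym2.eq_iff.mp he with ⟨rfl, rfl⟩ | ⟨rfl, rfl⟩ <;>
    rcases hij with h | ⟨-, h⟩ | ⟨-, h⟩
  exacts [hab h, hσ _ h, hab h, hba h, hba h, hσ _ h]

def mergeProperColoringEquiv (hab : ¬ H.Adj a b) :
    {x : ProperColoring H t // x.1 a = x.1 b} ≃ ProperColoring (H.map π) t where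
  toFun x := ⟨liftMerge x.1.1 x.2, by
    rintro _ _ ⟨-, i, j, hij, rfl, rfl⟩
    exact x.1.2 i j hij⟩
  invFun w := ⟨⟨w.1 ∘ π, fun i j hij =>
      w.2 _ _ ⟨merge_mk_ne_mk_of_adj hab hij, i, j, hij, rfl, rfl⟩⟩,
    congrArg w.1 merge_mk_left_eq_mk_right⟩
  left_inv _ := rfl
  right_inv w := Subtype.ext (liftMerge_comp_mk w.1)

def mergeCompatiblePairEquiv (hab : ¬ H.Adj a b) :
    {q : CompatiblePair H t //
        q.1.1 a = q.1.1 b ∧ ¬ TransGen q.1.2 a b ∧ ¬ TransGen q.1.2 b a} ≃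
      CompatiblePair (H.map π) t where
  toFun q := ⟨(liftMerge q.1.1.1 q.2.1, Relation.Map q.1.1.2 π π),
    ⟨q.1.2.1.1.map (acyclic_map_mk q.1.2.1.2 q.2.2.1 q.2.2.2),
      acyclic_map_mk q.1.2.1.2 q.2.2.1 q.2.2.2⟩,
    by rintro _ _ ⟨i, j, hij, rfl, rfl⟩; exact q.1.2.2 i j hij⟩
  invFun w := ⟨⟨(w.1.1 ∘ π, (w.1.2 on π) ⊓ H.Adj),
      ⟨w.2.1.1.comap fun _ _ => merge_mk_ne_mk_of_adj hab,
        fun _ => not_transGen_inf_onFun w.2.1.2 _ rfl⟩,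
      fun i j h => w.2.2 _ _ h.1⟩,
    congrArg w.1.1 merge_mk_left_eq_mk_right,
    not_transGen_inf_onFun w.2.1.2 _ merge_mk_left_eq_mk_right,
    not_transGen_inf_onFun w.2.1.2 _ merge_mk_left_eq_mk_right.symm⟩
  left_inv q := Subtype.ext <| Subtype.ext <| Prod.ext rfl <|
    IsOrientationOf.comap_map_inf_adj q.1.2.1.1 (acyclic_map_mk q.1.2.1.2 q.2.2.1 q.2.2.2)
  right_inv w := Subtype.ext <| Prod.ext (liftMerge_comp_mk w.1.1)
    (IsOrientationOf.map_comap_inf_adj w.2.1.1)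

end Merge

section Counting

variable {G : SimpleGraph V} {a b : V} {t : ℕ}

local notation "π" => Quotient.mk (mergeSetoid a b)

def compatiblePairBotEquiv : CompatiblePair (⊥ : SimpleGraph V) t ≃ (V → Fin t) where
  toFun p := p.1.1
  invFun x := ⟨(x, ⊥), ⟨⟨fun _ _ h => h, fun _ _ h => h.elim⟩, fun _ h => by
    obtain ⟨_, h, -⟩ := TransGen.head'_iff.mp h
    exact h⟩, fun _ _ h => h.elim⟩
  left_inv p := Subtype.ext <| Prod.ext rfl <| funext₂ fun i j =>
    propext ⟨False.elim, p.2.1.1.1 i j⟩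
  right_inv _ := rfl

variable [Finite V]

theorem card_edgeSet_map_le (f : V → W) : Nat.card (G.map f).edgeSet ≤ Nat.card G.edgeSet := by
  have hsub : (G.map f).edgeSet ⊆ Sym2.map f '' G.edgeSet := by
    intro e he
    induction e using Sym2.ind with
    | _ x y =>
      obtain ⟨-, i, j, hij, rfl, rfl⟩ := he
      exact ⟨s(i, j), hij, rfl⟩
  rw [Nat.card_coe_set_eq, Nat.card_coe_set_eq]
  exact (Set.ncard_le_ncard hsub ((Set.toFinite _).image _)).trans
    (Set.ncard_image_le (Set.toFinite _))

theorem card_edgeSet_deleteEdges_lt (hab : G.Adj a b) :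
    Nat.card (G.deleteEdges {s(a, b)}).edgeSet < Nat.card G.edgeSet := by
  rw [SimpleGraph.edgeSet_deleteEdges, Nat.card_coe_set_eq, Nat.card_coe_set_eq]
  exact Set.ncard_sdiff_singleton_lt_of_mem hab

theorem card_properColoring_bot :
    Nat.card (ProperColoring (⊥ : SimpleGraph V) t) = t ^ Nat.card V := by
  rw [Nat.card_congr (Equiv.subtypeUnivEquiv fun _ _ _ h => h.elim), Nat.card_fun, Nat.card_fin]

theorem card_compatiblePair_bot :
    Nat.card (CompatiblePair (⊥ : SimpleGraph V) t) = t ^ Nat.card V := by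
  rw [Nat.card_congr compatiblePairBotEquiv, Nat.card_fun, Nat.card_fin]

theorem card_properColoring_deletion_contraction (hab : G.Adj a b) :
    Nat.card (ProperColoring (G.deleteEdges {s(a, b)}) t) = Nat.card (ProperColoring G t) +
      Nat.card (ProperColoring ((G.deleteEdges {s(a, b)}).map π) t) := by
  classical
  rw [← Nat.card_congr (Equiv.sumCompl fun x : ProperColoring (G.deleteEdges {s(a, b)}) t =>
      x.1 a = x.1 b), Nat.card_sum, Nat.card_congr (mergeProperColoringEquiv (by simp)),
    Nat.card_congr (properColoringNeEquiv hab), add_comm]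

theorem card_compatiblePair_deletion_contraction (hab : G.Adj a b) :
    Nat.card (CompatiblePair G t) = Nat.card (CompatiblePair (G.deleteEdges {s(a, b)}) t) +
      Nat.card (CompatiblePair ((G.deleteEdges {s(a, b)}).map π) t) := by
  rw [card_compatiblePair_eq_deleteEdges_add hab,
    Nat.card_congr (mergeCompatiblePairEquiv (by simp))]

open Polynomial in
theorem exists_polynomial_eval_eq_card (G : SimpleGraph V) :
    ∃ c : ℤ[X], ∀ t : ℕ, c.eval (t : ℤ) = Nat.card (ProperColoring G t) ∧
      (-1) ^ Nat.card V * c.eval (-(t : ℤ)) = Nat.card (CompatiblePair G t) := by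
  obtain ⟨n, hn⟩ : ∃ n, Nat.card G.edgeSet = n := ⟨_, rfl⟩
  induction n using Nat.strong_induction_on generalizing V with
  | _ n ih =>
  rcases eq_or_ne G ⊥ with rfl | hG
  · refine ⟨X ^ Nat.card V, fun t => ?_⟩
    simp [card_properColoring_bot, card_compatiblePair_bot, ← mul_pow]
  obtain ⟨a, b, hab⟩ := SimpleGraph.ne_bot_iff_exists_adj.mp hG
  have hdel := hn ▸ card_edgeSet_deleteEdges_lt hab
  obtain ⟨c₁, hc₁⟩ := ih _ hdel _ rfl
  obtain ⟨c₂, hc₂⟩ :=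
    ih _ ((card_edgeSet_map_le (Quotient.mk (mergeSetoid a b))).trans_lt hdel) _ rfl
  refine ⟨c₁ - c₂, fun t => ⟨?_, ?_⟩⟩
  · rw [eval_sub, (hc₁ t).1, (hc₂ t).1, card_properColoring_deletion_contraction hab]
    push_cast
    ring
  · rw [card_compatiblePair_deletion_contraction hab, Nat.cast_add, ← (hc₁ t).2,
      ← (hc₂ t).2, card_eq_card_quotient_mergeSetoid_add_one hab.ne, eval_sub]
    ring

end Counting

end ChromaticReciprocity

/-- **Stanley's reciprocity theorem for chromatic polynomials.** For a finite simple graph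
`G = (V,E)` there is an integer polynomial `c_G` counting the proper `t`-colorings for every
positive integer `t`, and `(-1)^{|V|} c_G(-t)` counts the pairs consisting of a `t`-coloring
and a compatible acyclic orientation of `G`. -/
theorem chromatic_reciprocity {V : Type*} [Fintype V] (G : SimpleGraph V) :
    ∃ c : Polynomial ℤ,
      (∀ t : ℕ, 0 < t → c.eval (t : ℤ)
        = (Nat.card {x : V → Fin t // ∀ i j, G.Adj i j → x i ≠ x j} : ℤ)) ∧
      (∀ t : ℕ, 0 < t → (-1) ^ (Fintype.card V) * c.eval (-(t : ℤ))
        = (Nat.card {p : (V → Fin t) × (V → V → Prop) //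
            IsAcyclicOrientation G p.2 ∧ ∀ i j, p.2 i j → p.1 i ≤ p.1 j} : ℤ)) := by
  obtain ⟨c, hc⟩ := ChromaticReciprocity.exists_polynomial_eval_eq_card G
  exact ⟨c, fun t _ => (hc t).1, fun t _ => Fintype.card_eq_nat_card (α := V) ▸ (hc t).2⟩
end

section
/- Let G = (V,E) be a finite simple graph and let c_G be the polynomial with c_G(t) equal to the number of proper t-colorings of G for every positive integer t. Then (−1)^{|V|} · c_G(−1) equals the number of acyclic orientations of G. -/
/-!
Both sides satisfy deletion–contraction along an edge `ab`. Proper colourings of `G - ab` split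
according to whether `a` and `b` get the same colour, giving `c_{G-ab} = c_G + c_{G/ab}`. An acyclic
orientation of `G` with `a → b` is the same as an acyclic orientation of `G - ab` with no path
`b ⇝ a`, and symmetrically. Every acyclic orientation of `G - ab` lacks a path in at least one
direction; those lacking both are counted twice, and they are exactly the pull-backs of the acyclic
orientations of `G / ab`, since merging two vertices joined by no path creates no cycle. Hence
`a(G) = a(G - ab) + a(G / ab)`, and as `G / ab` has one vertex fewer, `(-1)^{|V|} c_G(-1)` obeys
the same recursion. Induction on the number of vertices, then on the graph, reduces everything
to the edgeless graph, where both sides equal `1`.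
-/

theorem Nat.card_subtype_and_add_card_subtype_and_not {α : Type*} [Finite α] (P Q : α → Prop) :
    Nat.card {x // P x ∧ Q x} + Nat.card {x // P x ∧ ¬ Q x} = Nat.card {x // P x} := by
  have := Set.ncard_inter_add_ncard_sdiff_eq_ncard {x | P x} {x | Q x}
  rwa [← Nat.card_coe_set_eq, ← Nat.card_coe_set_eq, ← Nat.card_coe_set_eq] at this

theorem Nat.card_subtype_or_add_card_subtype_and {α : Type*} [Finite α] (P Q : α → Prop) :
    Nat.card {x // P x ∨ Q x} + Nat.card {x // P x ∧ Q x} =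
      Nat.card {x // P x} + Nat.card {x // Q x} := by
  have := Set.ncard_union_add_ncard_inter {x | P x} {x | Q x}
  rwa [← Nat.card_coe_set_eq, ← Nat.card_coe_set_eq, ← Nat.card_coe_set_eq,
    ← Nat.card_coe_set_eq] at this

open Relation

namespace Relation

variable {V W : Type*} {r : V → V → Prop}

theorem TransGen.cases_of_or_edge {a b x y : V}
    (h : TransGen (fun u v => r u v ∨ (u = a ∧ v = b)) x y) :
    TransGen r x y ∨ (ReflTransGen r x a ∧ ReflTransGen r b y) := by
  induction h with
  | single hxy =>
    rcases hxy with hxy | ⟨rfl, rfl⟩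
    · exact .inl (.single hxy)
    · exact .inr ⟨.refl, .refl⟩
  | tail _ hyz ih =>
    rcases hyz with hyz | ⟨rfl, rfl⟩
    · exact ih.imp (·.tail hyz) fun ⟨hxa, hby⟩ => ⟨hxa, hby.tail hyz⟩
    · exact .inr ⟨ih.elim (·.to_reflTransGen) (·.1), .refl⟩

theorem not_transGen_or_edge_self {a b : V} (hab : a ≠ b) (hr : ∀ x, ¬ TransGen r x x)
    (hba : ¬ TransGen r b a) (x : V) :
    ¬ TransGen (fun u v => r u v ∨ (u = a ∧ v = b)) x x := fun h =>
  match h.cases_of_or_edge with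
  | .inl h => hr x h
  | .inr ⟨hxa, hbx⟩ => (reflTransGen_iff_eq_or_transGen.mp (hbx.trans hxa)).elim hab hba

variable {f : V → W} {F : Set V}

theorem TransGen.exists_lift_of_map (hf : ∀ u v, f u = f v → u = v ∨ (u ∈ F ∧ v ∈ F))
    {i j : W} (h : TransGen (Relation.Map r f f) i j) :
    (∃ u v, f u = i ∧ f v = j ∧ TransGen r u v) ∨
      ((∃ u, f u = i ∧ ∃ x ∈ F, TransGen r u x) ∧ (∃ v, f v = j ∧ ∃ y ∈ F, TransGen r y v)) := by
  induction h with
  | single hij =>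
    obtain ⟨u, v, huv, rfl, rfl⟩ := hij
    exact .inl ⟨u, v, rfl, rfl, .single huv⟩
  | tail _ hjk ih =>
    obtain ⟨v', w, hv'w, hv', rfl⟩ := hjk
    rcases ih with ⟨u, v, rfl, hv, huv⟩ | ⟨hstart, v, hv, y, hy, hyv⟩
    · rcases hf v v' (hv.trans hv'.symm) with rfl | ⟨hvF, hv'F⟩
      · exact .inl ⟨u, w, rfl, rfl, huv.tail hv'w⟩
      · exact .inr ⟨⟨u, rfl, v, hvF, huv⟩, w, rfl, v', hv'F, .single hv'w⟩
    · refine .inr ⟨hstart, w, rfl, ?_⟩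
      rcases hf v v' (hv.trans hv'.symm) with rfl | ⟨-, hv'F⟩
      · exact ⟨y, hy, hyv.tail hv'w⟩
      · exact ⟨v', hv'F, .single hv'w⟩

theorem not_transGen_map_self (hf : ∀ u v, f u = f v ↔ u = v ∨ (u ∈ F ∧ v ∈ F))
    (hr : ∀ u v, f u = f v → ¬ TransGen r u v) (i : W) :
    ¬ TransGen (Relation.Map r f f) i i := by
  intro h
  rcases h.exists_lift_of_map (fun u v => (hf u v).mp) with
    ⟨u, v, hu, hv, huv⟩ | ⟨⟨u, hu, x, hx, hux⟩, v, hv, y, hy, hyv⟩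
  · exact hr u v (hu.trans hv.symm) huv
  · rcases (hf u v).mp (hu.trans hv.symm) with rfl | ⟨-, hvF⟩
    · exact hr y x ((hf y x).mpr (.inr ⟨hy, hx⟩)) (hyv.trans hux)
    · exact hr y v ((hf y v).mpr (.inr ⟨hy, hvF⟩)) hyv

end Relation

section Orientations

variable {V : Type*} {G H : SimpleGraph V} {o : V → V → Prop}

theorem IsOrientationOf.restrict (ho : IsOrientationOf G o) (hHG : H ≤ G) :
    IsOrientationOf H (fun u v => o u v ∧ H.Adj u v) :=
  ⟨fun _ _ h => h.2, fun u v huv =>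
    ⟨fun h h' => (ho.2 u v (hHG huv)).mp h.1 h'.1,
      fun h => ⟨(ho.2 u v (hHG huv)).mpr fun h' => h ⟨h', huv.symm⟩, huv⟩⟩⟩

theorem IsAcyclicOrientation.not_transGen_of_rel (ho : IsAcyclicOrientation G o) {u v : V}
    (huv : o u v) : ¬ TransGen o v u :=
  fun h => ho.2 u (h.head huv)

variable {a b : V}

theorem SimpleGraph.deleteEdges_pair_adj {u v : V} :
    (G.deleteEdges {s(a, b)}).Adj u v ↔ G.Adj u v ∧ ¬ ((u = a ∧ v = b) ∨ (u = b ∧ v = a)) := by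
  simp

theorem SimpleGraph.deleteEdges_pair_lt (hab : G.Adj a b) : G.deleteEdges {s(a, b)} < G :=
  (G.deleteEdges_le _).lt_of_ne fun h =>
    (SimpleGraph.deleteEdges_pair_adj.mp (by rw [h]; exact hab)).2 (.inl ⟨rfl, rfl⟩)

def acyclicOrientationsAdjEquiv (hab : G.Adj a b) :
    {o // IsAcyclicOrientation G o ∧ o a b} ≃
      {o // IsAcyclicOrientation (G.deleteEdges {s(a, b)}) o ∧ ¬ TransGen o b a} where
  toFun o := ⟨fun u v => o.1 u v ∧ (G.deleteEdges {s(a, b)}).Adj u v,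
    ⟨o.2.1.1.restrict (G.deleteEdges_le _),
      fun u h => o.2.1.2 u (TransGen.mono (fun _ _ => And.left) _ _ h)⟩,
    fun h => o.2.1.not_transGen_of_rel o.2.2 (TransGen.mono (fun _ _ => And.left) _ _ h)⟩
  invFun o := ⟨fun u v => o.1 u v ∨ (u = a ∧ v = b), by
    obtain ⟨o, ⟨ho, hcyc⟩, hba⟩ := o
    refine ⟨⟨⟨?_, fun u v huv => ?_⟩, not_transGen_or_edge_self hab.ne hcyc hba⟩, .inr ⟨rfl, rfl⟩⟩
    · rintro u v (h | ⟨rfl, rfl⟩)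
      exacts [(G.deleteEdges_le _) (ho.1 u v h), hab]
    · by_cases huv' : (G.deleteEdges {s(a, b)}).Adj u v
      · have := SimpleGraph.deleteEdges_pair_adj.mp huv'
        have := ho.2 u v huv'
        grind
      · have hu : ¬ o u v := fun h => huv' (ho.1 u v h)
        have hv : ¬ o v u := fun h => huv' (ho.1 v u h).symm
        have := SimpleGraph.deleteEdges_pair_adj.not.mp huv'
        have := hab.ne
        grind⟩
  left_inv o := by
    obtain ⟨o, ho, hoab⟩ := o
    ext u v
    have := ho.1.1 u v
    have := ho.1.2 a b hab
    dsimp only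
    simp only [SimpleGraph.deleteEdges_pair_adj]
    grind
  right_inv o := by
    obtain ⟨o, ho, -⟩ := o
    ext u v
    have := ho.1.1 u v
    have := ho.1.1 a b
    have := ho.1.1 b a
    dsimp only
    simp only [SimpleGraph.deleteEdges_pair_adj] at *
    grind

theorem card_acyclicOrientations_bot :
    Nat.card {o // IsAcyclicOrientation (⊥ : SimpleGraph V) o} = 1 := by
  refine Nat.card_eq_one_iff_unique.mpr ⟨⟨fun o o' => ?_⟩, ⟨⟨fun _ _ => False, ?_⟩⟩⟩
  · ext u v
    exact ⟨fun h => (o.2.1.1 u v h).elim, fun h => (o'.2.1.1 u v h).elim⟩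
  · exact ⟨⟨fun _ _ => False.elim, fun _ _ h => h.elim⟩,
      fun _ h => (TransGen.head'_iff.mp h).choose_spec.1⟩

end Orientations

section Map

variable {V W : Type*} {H : SimpleGraph V} {f : V → W}

theorem SimpleGraph.map_adj_iff_of_ne (hH : ∀ u v, H.Adj u v → f u ≠ f v) {i j : W} :
    (H.map f).Adj i j ↔ Relation.Map H.Adj f f i j :=
  ⟨And.right, fun h => ⟨by obtain ⟨u, v, huv, rfl, rfl⟩ := h; exact hH u v huv, h⟩⟩

theorem IsOrientationOf.isAcyclicOrientation_map {o : V → V → Prop} {F : Set V}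
    (hH : ∀ u v, H.Adj u v → f u ≠ f v)
    (hf : ∀ u v, f u = f v ↔ u = v ∨ (u ∈ F ∧ v ∈ F)) (ho : IsOrientationOf H o)
    (hfib : ∀ u v, f u = f v → ¬ TransGen o u v) :
    IsAcyclicOrientation (H.map f) (Relation.Map o f f) := by
  have hcyc := not_transGen_map_self hf hfib
  refine ⟨⟨?_, fun i j hij => ⟨fun h h' => hcyc i (.tail (.single h) h'), fun h => ?_⟩⟩, hcyc⟩
  · rintro _ _ ⟨u, v, huv, rfl, rfl⟩
    exact (SimpleGraph.map_adj_iff_of_ne hH).mpr ⟨u, v, ho.1 u v huv, rfl, rfl⟩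
  · obtain ⟨u, v, huv, rfl, rfl⟩ := ((SimpleGraph.map_adj_iff_of_ne hH).mp hij)
    exact ⟨u, v, (ho.2 u v huv).mpr fun hvu => h ⟨v, u, hvu, rfl, rfl⟩, rfl, rfl⟩

theorem IsAcyclicOrientation.comap {p : W → W → Prop} (hH : ∀ u v, H.Adj u v → f u ≠ f v)
    (hp : IsAcyclicOrientation (H.map f) p) :
    IsAcyclicOrientation H (fun u v => H.Adj u v ∧ p (f u) (f v)) ∧
      ∀ u v, f u = f v → ¬ TransGen (fun u v => H.Adj u v ∧ p (f u) (f v)) u v := by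
  have hfib : ∀ u v, f u = f v → ¬ TransGen (fun u v => H.Adj u v ∧ p (f u) (f v)) u v :=
    fun u v huv h => hp.2 (f v) <| by
      simpa only [Function.onFun, huv] using TransGen.lift f (fun _ _ h => h.2) u v h
  refine ⟨⟨⟨fun _ _ h => h.1, fun u v huv => ?_⟩, fun u => hfib u u rfl⟩, hfib⟩
  have hp' := hp.1.2 _ _ ((SimpleGraph.map_adj_iff_of_ne hH).mpr ⟨u, v, huv, rfl, rfl⟩)
  exact ⟨fun h h' => hp'.mp h.2 h'.2, fun h => ⟨huv, hp'.mpr fun h' => h ⟨huv.symm, h'⟩⟩⟩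

def acyclicOrientationsMapEquiv {F : Set V} (hH : ∀ u v, H.Adj u v → f u ≠ f v)
    (hf : ∀ u v, f u = f v ↔ u = v ∨ (u ∈ F ∧ v ∈ F)) :
    {o // IsAcyclicOrientation H o ∧ ∀ u v, f u = f v → ¬ TransGen o u v} ≃
      {p // IsAcyclicOrientation (H.map f) p} where
  toFun o := ⟨Relation.Map o.1 f f, o.2.1.1.isAcyclicOrientation_map hH hf o.2.2⟩
  invFun p := ⟨fun u v => H.Adj u v ∧ p.1 (f u) (f v), p.2.comap hH⟩
  left_inv o := by
    obtain ⟨o, ho, hfib⟩ := o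
    ext u v
    refine ⟨fun ⟨huv, u', v', h, hu, hv⟩ => ?_, fun h => ⟨ho.1.1 u v h, u, v, h, rfl, rfl⟩⟩
    by_contra hn
    have hvu : o v u := not_not.mp ((ho.1.2 u v huv).not.mp hn)
    exact not_transGen_map_self hf hfib (f u)
      (.tail (.single ⟨u', v', h, hu, hv⟩) ⟨v, u, hvu, rfl, rfl⟩)
  right_inv p := by
    obtain ⟨p, hp⟩ := p
    ext i j
    refine ⟨fun ⟨u, v, ⟨_, h⟩, hu, hv⟩ => hu ▸ hv ▸ h, fun h => ?_⟩
    obtain ⟨u, v, huv, rfl, rfl⟩ := (SimpleGraph.map_adj_iff_of_ne hH).mp (hp.1.1 i j h)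
    exact ⟨u, v, ⟨huv, h⟩, rfl, rfl⟩

noncomputable def properColoringsMapEquiv (α : Type*) (hH : ∀ u v, H.Adj u v → f u ≠ f v)
    (hf : Function.Surjective f) :
    {x : V → α // (∀ u v, H.Adj u v → x u ≠ x v) ∧ ∀ u v, f u = f v → x u = x v} ≃
      {y : W → α // ∀ i j, (H.map f).Adj i j → y i ≠ y j} where
  toFun x := ⟨x.1 ∘ Function.surjInv hf, by
    rintro _ _ ⟨-, u, v, huv, rfl, rfl⟩
    simpa only [Function.comp_apply, x.2.2 _ _ (Function.surjInv_eq hf _)] using x.2.1 u v huv⟩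
  invFun y := ⟨y.1 ∘ f, fun u v huv =>
    y.2 _ _ ((SimpleGraph.map_adj_iff_of_ne hH).mpr ⟨u, v, huv, rfl, rfl⟩),
    fun _ _ h => congrArg y.1 h⟩
  left_inv x := Subtype.ext (funext fun w => x.2.2 _ _ (Function.surjInv_eq hf _))
  right_inv y := Subtype.ext (funext fun i => congrArg y.1 (Function.surjInv_eq hf i))

end Map

section Contraction

variable {V : Type*} {G : SimpleGraph V} {a b : V}

open Classical in
/-- The vertex set of `G / ab` is `V \ {b}`, the merged vertex being represented by `a`. -/
noncomputable def mergeVertex (h : a ≠ b) (v : V) : {v : V // v ≠ b} :=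
  if hv : v = b then ⟨a, h⟩ else ⟨v, hv⟩

theorem mergeVertex_of_ne (h : a ≠ b) {v : V} (hv : v ≠ b) : mergeVertex h v = ⟨v, hv⟩ :=
  dif_neg hv

theorem mergeVertex_surjective (h : a ≠ b) : Function.Surjective (mergeVertex h) :=
  fun i => ⟨i, mergeVertex_of_ne h i.2⟩

theorem mergeVertex_eq_iff (h : a ≠ b) {u v : V} :
    mergeVertex h u = mergeVertex h v ↔ u = v ∨ (u ∈ ({a, b} : Set V) ∧ v ∈ ({a, b} : Set V)) := by
  unfold mergeVertex
  split_ifs <;> simp only [Subtype.mk.injEq, Set.mem_insert_iff, Set.mem_singleton_iff] <;> grind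

theorem forall_mergeVertex_eq_imp_iff (h : a ≠ b) {R : V → V → Prop} :
    (∀ u v, mergeVertex h u = mergeVertex h v → R u v) ↔ (∀ u, R u u) ∧ R a b ∧ R b a := by
  simp only [mergeVertex_eq_iff, Set.mem_insert_iff, Set.mem_singleton_iff]
  constructor
  · intro hR
    exact ⟨fun u => hR u u (.inl rfl), hR a b (by simp), hR b a (by simp)⟩
  · rintro ⟨hrefl, hab, hba⟩ u v (rfl | ⟨hu | hu, hv | hv⟩)
    · exact hrefl u
    all_goals rw [hu, hv]; first | exact hrefl _ | assumption

theorem mergeVertex_ne_of_adj (h : a ≠ b) {u v : V} (huv : (G.deleteEdges {s(a, b)}).Adj u v) :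
    mergeVertex h u ≠ mergeVertex h v := by
  rw [Ne, mergeVertex_eq_iff]
  have := huv.ne
  simp only [SimpleGraph.deleteEdges_pair_adj, Set.mem_insert_iff, Set.mem_singleton_iff] at *
  grind

noncomputable def SimpleGraph.contractEdge (G : SimpleGraph V) (h : a ≠ b) :
    SimpleGraph {v // v ≠ b} :=
  (G.deleteEdges {s(a, b)}).map (mergeVertex h)

variable [Finite V]

theorem card_properColorings_deleteEdges (α : Type*) [Finite α] (hab : G.Adj a b) :
    Nat.card {x : V → α // ∀ u v, (G.deleteEdges {s(a, b)}).Adj u v → x u ≠ x v} =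
      Nat.card {x : V → α // ∀ u v, G.Adj u v → x u ≠ x v} +
        Nat.card {y : {v // v ≠ b} → α // ∀ i j, (G.contractEdge hab.ne).Adj i j → y i ≠ y j} := by
  rw [← Nat.card_subtype_and_add_card_subtype_and_not _ (fun x : V → α => x a = x b), add_comm]
  congr 1
  · refine Nat.card_congr (Equiv.subtypeEquivRight fun x => ⟨fun ⟨hx, hxab⟩ u v huv => ?_,
      fun hx => ⟨fun u v huv => hx u v (G.deleteEdges_le _ huv), hx a b hab⟩⟩)
    by_cases huv' : (G.deleteEdges {s(a, b)}).Adj u v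
    · exact hx u v huv'
    · have := SimpleGraph.deleteEdges_pair_adj.not.mp huv'
      grind
  · refine Nat.card_congr ((Equiv.subtypeEquivRight fun x => ?_).trans
      (properColoringsMapEquiv α (fun _ _ => mergeVertex_ne_of_adj hab.ne)
        (mergeVertex_surjective hab.ne)))
    rw [forall_mergeVertex_eq_imp_iff hab.ne]
    grind

theorem card_acyclicOrientations_eq_deleteEdges_add_contractEdge (hab : G.Adj a b) :
    Nat.card {o // IsAcyclicOrientation G o} =
      Nat.card {o // IsAcyclicOrientation (G.deleteEdges {s(a, b)}) o} +
        Nat.card {p // IsAcyclicOrientation (G.contractEdge hab.ne) p} := by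
  have hsplit : Nat.card {o // IsAcyclicOrientation G o} =
      Nat.card {o // IsAcyclicOrientation (G.deleteEdges {s(a, b)}) o ∧ ¬ TransGen o b a} +
        Nat.card {o // IsAcyclicOrientation (G.deleteEdges {s(a, b)}) o ∧ ¬ TransGen o a b} := by
    rw [← Nat.card_subtype_and_add_card_subtype_and_not _ (fun o => o a b)]
    have hba :
        {o // IsAcyclicOrientation G o ∧ ¬ o a b} ≃ {o // IsAcyclicOrientation G o ∧ o b a} :=
      Equiv.subtypeEquivRight fun o =>
        and_congr_right fun ho => (ho.1.2 b a hab.symm).symm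
    rw [Nat.card_congr (acyclicOrientationsAdjEquiv hab), Nat.card_congr hba,
      Nat.card_congr (acyclicOrientationsAdjEquiv hab.symm), Sym2.eq_swap]
  have hcover (o) (ho : IsAcyclicOrientation (G.deleteEdges {s(a, b)}) o) :
      ¬ TransGen o b a ∨ ¬ TransGen o a b :=
    not_and_or.mp fun ⟨hba, hab⟩ => ho.2 a (hab.trans hba)
  have hboth : {o // (IsAcyclicOrientation (G.deleteEdges {s(a, b)}) o ∧ ¬ TransGen o b a) ∧
      (IsAcyclicOrientation (G.deleteEdges {s(a, b)}) o ∧ ¬ TransGen o a b)} ≃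
      {p // IsAcyclicOrientation (G.contractEdge hab.ne) p} := by
    refine (Equiv.subtypeEquivRight fun o => ?_).trans
      (acyclicOrientationsMapEquiv (fun _ _ => mergeVertex_ne_of_adj hab.ne)
        (fun _ _ => mergeVertex_eq_iff hab.ne))
    rw [forall_mergeVertex_eq_imp_iff hab.ne]
    exact ⟨fun ⟨⟨ho, hba⟩, _, hab⟩ => ⟨ho, ho.2, hab, hba⟩,
      fun ⟨ho, _, hab, hba⟩ => ⟨⟨ho, hba⟩, ho, hab⟩⟩
  rw [hsplit, ← Nat.card_subtype_or_add_card_subtype_and, Nat.card_congr hboth]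
  congr 1
  exact Nat.card_congr (Equiv.subtypeEquivRight fun o =>
    ⟨fun h => h.elim And.left And.left,
      fun ho => (hcover o ho).imp (fun h => ⟨ho, h⟩) (fun h => ⟨ho, h⟩)⟩)

end Contraction

open Polynomial

section Chromatic

variable {V : Type*}

def IsChromaticPolynomial (G : SimpleGraph V) (q : ℤ[X]) : Prop :=
  ∀ t : ℕ, 0 < t → q.eval (t : ℤ) = (Nat.card {x : V → Fin t // ∀ i j, G.Adj i j → x i ≠ x j} : ℤ)

theorem IsChromaticPolynomial.unique {G : SimpleGraph V} {p q : ℤ[X]}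
    (hp : IsChromaticPolynomial G p) (hq : IsChromaticPolynomial G q) : p = q := by
  refine eq_of_infinite_eval_eq p q (Set.infinite_of_injective_forall_mem
    (f := fun n : ℕ => ((n + 1 : ℕ) : ℤ)) (fun m n h => by simpa using h) fun n => ?_)
  simp only [Set.mem_ofPred_eq, hp (n + 1) n.succ_pos, hq (n + 1) n.succ_pos]

theorem isChromaticPolynomial_bot [Finite V] :
    IsChromaticPolynomial (⊥ : SimpleGraph V) (X ^ Nat.card V) := by
  intro t _
  rw [Nat.card_congr (Equiv.subtypeUnivEquiv fun x u v h => h.elim), Nat.card_fun, Nat.card_fin,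
    eval_pow, eval_X]
  push_cast
  rfl

theorem IsChromaticPolynomial.of_deleteEdges_of_contractEdge [Finite V] {G : SimpleGraph V}
    {a b : V} (hab : G.Adj a b) {qd qc : ℤ[X]}
    (hd : IsChromaticPolynomial (G.deleteEdges {s(a, b)}) qd)
    (hc : IsChromaticPolynomial (G.contractEdge hab.ne) qc) :
    IsChromaticPolynomial G (qd - qc) := by
  intro t ht
  rw [eval_sub, hd t ht, hc t ht, card_properColorings_deleteEdges (Fin t) hab]
  push_cast
  ring

end Chromatic

universe u

theorem exists_isChromaticPolynomial_and_card_acyclicOrientations (V : Type u) [Finite V]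
    (G : SimpleGraph V) : ∃ q, IsChromaticPolynomial G q ∧
      (-1) ^ Nat.card V * q.eval (-1) = Nat.card {o // IsAcyclicOrientation G o} := by
  induction hn : Nat.card V using Nat.strong_induction_on generalizing V with
  | _ n ih =>
  subst hn
  induction G using WellFoundedLT.induction with
  | _ G ihG =>
  by_cases hG : G = ⊥
  · subst hG
    refine ⟨X ^ Nat.card V, isChromaticPolynomial_bot, ?_⟩
    rw [eval_pow, eval_X, ← mul_pow, card_acyclicOrientations_bot]
    norm_num
  obtain ⟨a, b, hab⟩ : ∃ a b, G.Adj a b := by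
    by_contra! h
    exact hG (by ext u v; simpa using h u v)
  have hcard : Nat.card V = Nat.card {v // v ≠ b} + 1 := by
    classical
    rw [← Finite.card_option, Nat.card_congr (Equiv.optionSubtypeNe b)]
  obtain ⟨qd, hqd, hd⟩ := ihG _ (SimpleGraph.deleteEdges_pair_lt hab)
  obtain ⟨qc, hqc, hc⟩ := ih _ (by omega) {v // v ≠ b} (G.contractEdge hab.ne) rfl
  refine ⟨qd - qc, hqd.of_deleteEdges_of_contractEdge hab hqc, ?_⟩
  rw [card_acyclicOrientations_eq_deleteEdges_add_contractEdge hab, Nat.cast_add, ← hd, ← hc,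
    hcard, eval_sub]
  ring

/-- **Stanley's theorem on acyclic orientations.** If `c_G` is the chromatic polynomial of a
finite simple graph `G = (V,E)`, then `(-1)^{|V|} c_G(-1)` is the number of acyclic
orientations of `G`. -/
theorem acyclic_orientations_count {V : Type*} [Fintype V] (G : SimpleGraph V)
    (c : Polynomial ℤ)
    (hc : ∀ t : ℕ, 0 < t → c.eval (t : ℤ)
      = (Nat.card {x : V → Fin t // ∀ i j, G.Adj i j → x i ≠ x j} : ℤ)) :
    (-1) ^ (Fintype.card V) * c.eval (-1)
      = (Nat.card {o : V → V → Prop // IsAcyclicOrientation G o} : ℤ) := by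
  obtain ⟨q, hq, hq_count⟩ := exists_isChromaticPolynomial_and_card_acyclicOrientations V G
  rw [IsChromaticPolynomial.unique hc hq, Fintype.card_eq_nat_card]
  exact hq_count
end

section
/- Let Π be a finite poset with d elements. Let A(z) := (Σ_{t≥0} p_Π(t) z^t) · Π_{i=1}^d (1−z^i) and B(z) := (Σ_{t≥0} p_Π°(t) z^t) · Π_{i=1}^d (1−z^i); then A and B are polynomials in z with integer coefficients of degree at most d(d−1)/2, and B(z) = z^{d(d−1)/2} · A(1/z), i.e., for every k the coefficient of z^k in B equals the coefficient of z^{d(d−1)/2 − k} in A. (This is the precise form of the reciprocity P_Π(1/z) = (−z)^{|Π|} P_Π°(z) between the generating functions of Π-partitions and strict Π-partitions.) -/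
/-!
Stanley's fundamental lemma. Fix an injective labeling `ω` of `Π`. Every `x : Π → ℕ` becomes a
weakly decreasing sequence `x ∘ w` along exactly one bijection `w : Fin d ≃ Π`, the one sorting
`x` decreasingly with ties broken by increasing label; the sequences arising from a fixed `w`
are those that drop strictly at the descents of `ω ∘ w`, and `x` is a `(Π, ω)`-partition iff
this `w` is a linear extension. Subtracting the forced drops, the sequences attached to `w`
have generating function `z^(maj w) / ∏ᵢ (1 - z^i)`. A natural labeling gives the
`Π`-partitions, its reverse gives the strict ones, and reversing the labeling complements the
descent set of every `w`, which replaces `maj w` by `d(d-1)/2 - maj w`.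
-/

open Finset PowerSeries Function

namespace PPartition

section GenFun

variable {β γ : Type*}

noncomputable def genFun (f : β → ℕ) : PowerSeries ℤ :=
  PowerSeries.mk fun t => (Nat.card {b // f b = t} : ℤ)

lemma coeff_genFun (f : β → ℕ) (t : ℕ) : coeff t (genFun f) = Nat.card {b // f b = t} :=
  coeff_mk _ _

lemma genFun_subtype (p : β → Prop) (f : β → ℕ) :
    genFun (fun b : {b // p b} => f b) =
      PowerSeries.mk fun t => (Nat.card {b // p b ∧ f b = t} : ℤ) := by
  ext t
  rw [coeff_genFun, coeff_mk, Nat.card_congr (Equiv.subtypeSubtypeEquivSubtypeInter p (f · = t))]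

lemma genFun_comp_equiv (e : β ≃ γ) (f : γ → ℕ) : genFun (f ∘ e) = genFun f := by
  ext t
  rw [coeff_genFun, coeff_genFun]
  exact congrArg _ (Nat.card_congr (e.subtypeEquiv fun _ => Iff.rfl))

lemma genFun_unique [Unique β] (f : β → ℕ) : genFun f = X ^ f default := by
  ext t
  rw [coeff_genFun, coeff_X_pow]
  split_ifs with h
  · have : Unique {b // f b = t} :=
      ⟨⟨⟨default, h.symm⟩⟩, fun _ => Subtype.ext (Unique.eq_default _)⟩
    simp
  · have : IsEmpty {b // f b = t} := ⟨fun b => h (by rw [← b.2, Unique.eq_default b.1])⟩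
    simp

lemma genFun_add_const (f : β → ℕ) (m : ℕ) : genFun (fun b => f b + m) = X ^ m * genFun f := by
  ext t
  rw [coeff_genFun, coeff_X_pow_mul', coeff_genFun]
  split_ifs with h
  · exact congrArg _ (Nat.card_congr (Equiv.subtypeEquivRight fun b => by omega))
  · have : IsEmpty {b // f b + m = t} := ⟨fun b => h (by omega)⟩
    simp

lemma genFun_const_mul (f : β → ℕ) {m : ℕ} (hm : m ≠ 0) :
    genFun (fun b => m * f b) = expand m hm (genFun f) := by
  ext t
  rw [coeff_genFun, coeff_expand]
  split_ifs with h
  · obtain ⟨s, rfl⟩ := h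
    rw [Nat.mul_div_cancel_left _ (Nat.pos_of_ne_zero hm), coeff_genFun]
    exact congrArg _ (Nat.card_congr (Equiv.subtypeEquivRight fun b => by
      simp [Nat.mul_left_cancel_iff (Nat.pos_of_ne_zero hm)]))
  · have : IsEmpty {b // m * f b = t} := ⟨fun b => h ⟨f b, b.2.symm⟩⟩
    simp

lemma genFun_id : genFun (id : ℕ → ℕ) = PowerSeries.mk 1 := by
  ext t
  rw [coeff_genFun, coeff_mk, Pi.one_apply]
  exact congrArg _ (Nat.card_unique (α := {b : ℕ // b = t}))

lemma genFun_prod (f : β → ℕ) (g : γ → ℕ) (hf : ∀ t, Finite {b // f b = t})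
    (hg : ∀ t, Finite {c // g c = t}) :
    genFun (fun p : β × γ => f p.1 + g p.2) = genFun f * genFun g := by
  ext t
  let e : {p : β × γ // f p.1 + g p.2 = t} ≃
      Σ ij : antidiagonal t, {b // f b = ij.1.1} × {c // g c = ij.1.2} :=
    { toFun p := ⟨⟨(f p.1.1, g p.1.2), mem_antidiagonal.2 p.2⟩, ⟨p.1.1, rfl⟩, ⟨p.1.2, rfl⟩⟩
      invFun q := ⟨(q.2.1, q.2.2), by rw [q.2.1.2, q.2.2.2]; exact mem_antidiagonal.1 q.1.2⟩
      left_inv _ := rfl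
      right_inv := by
        rintro ⟨⟨⟨i, j⟩, h⟩, ⟨b, hb⟩, ⟨c, hc⟩⟩
        obtain rfl : f b = i := hb
        obtain rfl : g c = j := hc
        rfl }
  rw [coeff_genFun, coeff_mul, Nat.card_congr e, Nat.card_sigma,
    ← sum_coe_sort (antidiagonal t)]
  simp [coeff_genFun, Nat.card_prod]

lemma genFun_sigma {ι : Type*} [Fintype ι] {β : ι → Type*} (f : ∀ i, β i → ℕ)
    (hf : ∀ i t, Finite {b // f i b = t}) :
    genFun (fun p : Σ i, β i => f p.1 p.2) = ∑ i, genFun (f i) := by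
  ext t
  let e : {p : Σ i, β i // f p.1 p.2 = t} ≃ Σ i, {b // f i b = t} :=
    { toFun p := ⟨p.1.1, p.1.2, p.2⟩
      invFun q := ⟨⟨q.1, q.2.1⟩, q.2.2⟩
      left_inv _ := rfl
      right_inv _ := rfl }
  simp [coeff_genFun, map_sum, Nat.card_congr e, Nat.card_sigma]

lemma genFun_sum_of_isEmpty {α : Type*} [Fintype α] [IsEmpty α] (p : (α → ℕ) → Prop)
    (hp : ∀ x, p x) : genFun (fun x : {x // p x} => ∑ a, x.1 a) = 1 := by
  rw [← genFun_comp_equiv (Equiv.subtypeUnivEquiv hp).symm, genFun_unique]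
  simp

end GenFun

lemma finite_fiber_of_le {ι β : Type*} [Fintype ι] {g : β → ι → ℕ} (hg : Injective g)
    {f : β → ℕ} (hf : ∀ b i, g b i ≤ f b) (t : ℕ) : Finite {b // f b = t} :=
  Finite.of_injective
    (fun b i => (⟨g b.1 i, Nat.lt_succ_of_le ((hf b.1 i).trans_eq b.2)⟩ : Fin (t + 1)))
    fun _ _ h => Subtype.ext (hg (funext fun i => congrArg Fin.val (congrFun h i)))

section Weight

variable {m : ℕ}

def weight (y : Fin m → ℕ) : ℕ := ∑ i : Fin m, ((i : ℕ) + 1) * y i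

lemma le_weight (y : Fin m → ℕ) (i : Fin m) : y i ≤ weight y :=
  calc y i ≤ ((i : ℕ) + 1) * y i := Nat.le_mul_of_pos_left _ (Nat.succ_pos _)
    _ ≤ weight y := single_le_sum (f := fun j : Fin m => ((j : ℕ) + 1) * y j)
        (fun _ _ => Nat.zero_le _) (mem_univ i)

lemma weight_snoc (y : Fin m → ℕ) (a : ℕ) :
    weight (Fin.snoc y a : Fin (m + 1) → ℕ) = (m + 1) * a + weight y := by
  simp [weight, Fin.sum_univ_castSucc, add_comm]

lemma genFun_weight_succ (m : ℕ) :
    genFun (weight (m := m + 1)) =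
      genFun (fun a : ℕ => (m + 1) * a) * genFun (weight (m := m)) := by
  have hmul : ∀ t, Finite {a : ℕ // (m + 1) * a = t} := fun t =>
    have : Subsingleton {a : ℕ // (m + 1) * a = t} :=
      ⟨fun a b => Subtype.ext (Nat.eq_of_mul_eq_mul_left m.succ_pos (a.2.trans b.2.symm))⟩
    Finite.of_subsingleton
  rw [← genFun_comp_equiv (Fin.snocEquiv fun _ => ℕ),
    ← genFun_prod _ _ hmul (finite_fiber_of_le injective_id le_weight)]
  congr 1
  funext p
  exact weight_snoc p.2 p.1

lemma genFun_mul_left_mul_one_sub_X_pow {m : ℕ} (hm : m ≠ 0) :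
    genFun (fun a : ℕ => m * a) * (1 - X ^ m) = 1 := by
  have h := congrArg (expand m hm) (mk_one_mul_one_sub_eq_one ℤ)
  rwa [map_mul, map_sub, map_one, expand_X, ← genFun_id, ← genFun_const_mul id hm] at h

lemma genFun_weight_mul_prod (m : ℕ) :
    genFun (weight (m := m)) * ∏ i ∈ range m, (1 - X ^ (i + 1)) = 1 := by
  induction m with
  | zero => simp [genFun_unique, weight]
  | succ m ih =>
    calc _ = (genFun (weight (m := m)) * ∏ i ∈ range m, (1 - X ^ (i + 1))) *
          (genFun (fun a : ℕ => (m + 1) * a) * (1 - X ^ (m + 1))) := by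
          rw [genFun_weight_succ, prod_range_succ]; ring
      _ = 1 := by rw [ih, genFun_mul_left_mul_one_sub_X_pow m.succ_ne_zero, one_mul]

end Weight

section Compatible

variable {n : ℕ} (S : Finset (Fin n))

def IsCompatible (v : Fin (n + 1) → ℕ) : Prop :=
  ∀ i : Fin n, v i.succ + (if i ∈ S then 1 else 0) ≤ v i.castSucc

def maj : ℕ := ∑ i ∈ S, ((i : ℕ) + 1)

def ofGaps (y : Fin (n + 1) → ℕ) (i : Fin (n + 1)) : ℕ :=
  ∑ j ∈ Ici i, (y j + if j ∈ S.map Fin.castSuccEmb then 1 else 0)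

def gaps (v : Fin (n + 1) → ℕ) : Fin (n + 1) → ℕ :=
  Fin.snoc (fun i : Fin n => v i.castSucc - v i.succ - if i ∈ S then 1 else 0) (v (Fin.last n))

variable {S}

lemma ofGaps_last (y : Fin (n + 1) → ℕ) : ofGaps S y (Fin.last n) = y (Fin.last n) := by
  rw [ofGaps, ← Fin.top_eq_last, Ici_top, sum_singleton]
  simp [Fin.top_eq_last, Fin.castSucc_ne_last]

lemma ofGaps_castSucc (y : Fin (n + 1) → ℕ) (i : Fin n) :
    ofGaps S y i.castSucc = y i.castSucc + (if i ∈ S then 1 else 0) + ofGaps S y i.succ := by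
  have hIoi : Ioi i.castSucc = Ici i.succ := by
    ext j
    simp [Fin.castSucc_lt_iff_succ_le]
  rw [ofGaps, ← Ioi_insert, sum_insert notMem_Ioi_self, hIoi, ofGaps]
  simp

lemma isCompatible_ofGaps (y : Fin (n + 1) → ℕ) : IsCompatible S (ofGaps S y) := by
  intro i
  rw [ofGaps_castSucc]
  omega

lemma gaps_ofGaps (y : Fin (n + 1) → ℕ) : gaps S (ofGaps S y) = y := by
  funext i
  induction i using Fin.lastCases with
  | last => simp [gaps, ofGaps_last]
  | cast i =>
    simp only [gaps, Fin.snoc_castSucc, ofGaps_castSucc]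
    omega

lemma ofGaps_gaps {v : Fin (n + 1) → ℕ} (hv : IsCompatible S v) : ofGaps S (gaps S v) = v := by
  funext i
  induction i using Fin.reverseInduction with
  | last => simp [gaps, ofGaps_last]
  | cast i ih =>
    rw [ofGaps_castSucc, ih]
    simp only [gaps, Fin.snoc_castSucc]
    have := hv i
    omega

lemma sum_sum_Ici {m : ℕ} (f : Fin m → ℕ) :
    ∑ i, ∑ j ∈ Ici i, f j = ∑ j : Fin m, ((j : ℕ) + 1) * f j := by
  rw [sum_comm' (t' := univ) (s' := Iic) (by simp)]
  simp [Fin.card_Iic]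

lemma sum_ofGaps (y : Fin (n + 1) → ℕ) : ∑ i, ofGaps S y i = weight y + maj S := by
  simp only [ofGaps]
  rw [sum_sum_Ici]
  simp only [mul_add, sum_add_distrib, mul_ite, mul_one, mul_zero, ← sum_filter,
    filter_mem_eq_inter, univ_inter, sum_map]
  simp [weight, maj, sum_add_distrib]

def compatibleEquiv (S : Finset (Fin n)) : {v // IsCompatible S v} ≃ (Fin (n + 1) → ℕ) where
  toFun v := gaps S v
  invFun y := ⟨ofGaps S y, isCompatible_ofGaps y⟩
  left_inv v := Subtype.ext (ofGaps_gaps v.2)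
  right_inv := gaps_ofGaps

lemma genFun_compatible (S : Finset (Fin n)) :
    genFun (fun v : {v // IsCompatible S v} => ∑ i, v.1 i) =
      X ^ maj S * genFun (weight (m := n + 1)) := by
  rw [← genFun_add_const, ← genFun_comp_equiv (compatibleEquiv S)]
  congr 1
  funext v
  simp only [comp_apply, compatibleEquiv, Equiv.coe_fn_mk, ← sum_ofGaps, ofGaps_gaps v.2]

end Compatible

lemma existsUnique_strictMono_comp {α γ : Type*} [Fintype α] [LinearOrder γ] {m : ℕ}
    (hα : Fintype.card α = m) {K : α → γ} (hK : Injective K) :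
    ∃! w : Fin m ≃ α, StrictMono (K ∘ w) := by
  let e : Fin m ≃ α := (Fintype.equivFinOfCardEq hα).symm
  have hsort : StrictMono (K ∘ (Tuple.sort (K ∘ e)).trans e) :=
    (Tuple.monotone_sort (K ∘ e)).strictMono_of_injective
      (hK.comp (e.injective.comp (Tuple.sort _).injective))
  refine ⟨_, hsort, fun w hw => ?_⟩
  have hrange : Set.range (K ∘ w) = Set.range (K ∘ (Tuple.sort (K ∘ e)).trans e) := by
    simp only [Set.range_comp, Equiv.range_eq_univ]
  ext i
  exact hK (congrFun ((hw.range_inj hsort).1 hrange) i)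

section LabeledPartition

variable {α β : Type*} {n : ℕ} {ω : α → β} {x : α → ℕ}

/-- Stanley's `(P, ω)`-partitions. -/
def IsLabeledPartition [Preorder α] [Preorder β] (ω : α → β) (x : α → ℕ) : Prop :=
  ∀ a b, a < b → x b ≤ x a ∧ (ω b < ω a → x b < x a)

def descents [LinearOrder β] (s : Fin (n + 1) → β) : Finset (Fin n) :=
  {i | s i.succ < s i.castSucc}

def sortKey (ω : α → β) (x : α → ℕ) (a : α) : ℕᵒᵈ ×ₗ β :=
  toLex (OrderDual.toDual (x a), ω a)

lemma sortKey_lt_sortKey [LinearOrder β] {a b : α} :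
    sortKey ω x a < sortKey ω x b ↔ x b < x a ∨ x a = x b ∧ ω a < ω b := by
  simp [sortKey, Prod.Lex.lt_iff]

lemma sortKey_injective (hω : Injective ω) : Injective (sortKey ω x) :=
  fun _ _ h => hω (congrArg Prod.snd (toLex.injective h))

lemma isCompatible_descents_iff [LinearOrder β] (hω : Injective ω) (w : Fin (n + 1) ≃ α) :
    IsCompatible (descents (ω ∘ w)) (x ∘ w) ↔ StrictMono (sortKey ω x ∘ w) := by
  rw [Fin.strictMono_iff_lt_succ]
  refine forall_congr' fun i => ?_
  have hne : ω (w i.castSucc) ≠ ω (w i.succ) :=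
    hω.ne (w.injective.ne Fin.castSucc_lt_succ.ne)
  simp only [descents, mem_filter, mem_univ, true_and, comp_apply, sortKey_lt_sortKey]
  rcases hne.lt_or_gt with h | h
  · simp only [h, h.not_gt, if_false, add_zero, and_true]
    omega
  · simp [h, h.not_gt]

lemma isLabeledPartition_iff [Preorder α] [LinearOrder β] {w : Fin (n + 1) ≃ α}
    (hw : StrictMono (sortKey ω x ∘ w)) : IsLabeledPartition ω x ↔ StrictMono w.symm := by
  have hkey : ∀ a b, sortKey ω x a < sortKey ω x b ↔ w.symm a < w.symm b := fun a b => by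
    simpa using hw.lt_iff_lt (a := w.symm a) (b := w.symm b)
  constructor
  · intro hx a b hab
    refine lt_of_le_of_ne (not_lt.1 fun hba => ?_) (w.symm.injective.ne hab.ne)
    obtain ⟨hle, hlt⟩ := hx a b hab
    rcases sortKey_lt_sortKey.1 ((hkey b a).2 hba) with h | ⟨h, h'⟩
    · omega
    · exact (hlt h').ne h
  · intro hsymm a b hab
    rcases sortKey_lt_sortKey.1 ((hkey a b).2 (hsymm hab)) with h | ⟨h, h'⟩
    · exact ⟨h.le, fun _ => h⟩
    · exact ⟨h.ge, fun h'' => absurd h' h''.not_gt⟩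

lemma isLabeledPartition_iff_antitone [PartialOrder α] [Preorder β] (hω : StrictMono ω) :
    IsLabeledPartition ω x ↔ ∀ a b, a ≤ b → x b ≤ x a := by
  refine ⟨fun hx a b hab => ?_,
    fun hx a b hab => ⟨hx a b hab.le, fun h => absurd (hω hab) h.not_gt⟩⟩
  rcases hab.eq_or_lt with rfl | hab
  · exact le_rfl
  · exact (hx a b hab).1

lemma isLabeledPartition_iff_strictAnti [Preorder α] [Preorder β] (hω : StrictAnti ω) :
    IsLabeledPartition ω x ↔ ∀ a b, a < b → x b < x a :=
  ⟨fun hx a b hab => (hx a b hab).2 (hω hab),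
    fun hx a b hab => ⟨(hx a b hab).le, fun _ => hx a b hab⟩⟩

variable [Preorder α] [LinearOrder β]

def toLabeledPartition (hω : Injective ω)
    (p : Σ w : {w : Fin (n + 1) ≃ α // StrictMono w.symm},
      {v // IsCompatible (descents (ω ∘ w.1)) v}) :
    {x // IsLabeledPartition ω x} :=
  ⟨p.2.1 ∘ p.1.1.symm, by
    have hc : IsCompatible (descents (ω ∘ p.1.1)) ((p.2.1 ∘ p.1.1.symm) ∘ p.1.1) := by
      simpa [comp_assoc] using p.2.2
    exact (isLabeledPartition_iff ((isCompatible_descents_iff hω _).1 hc)).2 p.1.2⟩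

lemma toLabeledPartition_bijective [Fintype α] (hα : Fintype.card α = n + 1)
    (hω : Injective ω) : Bijective (toLabeledPartition (n := n) hω) := by
  constructor
  · rintro ⟨⟨w, hw⟩, ⟨v, hv⟩⟩ ⟨⟨w', hw'⟩, ⟨v', hv'⟩⟩ h
    have hx : v ∘ w.symm = v' ∘ w'.symm := congrArg Subtype.val h
    have hsort : ∀ (w : Fin (n + 1) ≃ α) (v : Fin (n + 1) → ℕ),
        IsCompatible (descents (ω ∘ w)) v → StrictMono (sortKey ω (v ∘ w.symm) ∘ w) :=
      fun w v hv => (isCompatible_descents_iff hω w).1 (by simpa [comp_assoc] using hv)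
    obtain rfl : w = w' := (existsUnique_strictMono_comp hα (sortKey_injective hω)).unique
      (hsort w v hv) (hx ▸ hsort w' v' hv')
    obtain rfl : v = v' := funext fun i => by simpa using congrFun hx (w i)
    rfl
  · rintro ⟨x, hx⟩
    obtain ⟨w, hw, -⟩ := existsUnique_strictMono_comp hα (sortKey_injective (x := x) hω)
    refine ⟨⟨⟨w, (isLabeledPartition_iff hw).1 hx⟩,
      ⟨x ∘ w, (isCompatible_descents_iff hω w).2 hw⟩⟩, ?_⟩
    simp [toLabeledPartition, comp_assoc]

open scoped Classical in
theorem genFun_labeledPartition [Fintype α] (hα : Fintype.card α = n + 1) (hω : Injective ω) :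
    genFun (fun x : {x // IsLabeledPartition ω x} => ∑ a, x.1 a) =
      (∑ w : {w : Fin (n + 1) ≃ α // StrictMono w.symm}, X ^ maj (descents (ω ∘ w.1))) *
        genFun (weight (m := n + 1)) := by
  rw [← genFun_comp_equiv (Equiv.ofBijective _ (toLabeledPartition_bijective hα hω)), sum_mul]
  simp_rw [← genFun_compatible]
  rw [← genFun_sigma]
  · congr 1
    funext p
    simp [toLabeledPartition, Equiv.sum_comp]
  · exact fun _ => finite_fiber_of_le Subtype.val_injective fun v i =>
      single_le_sum (fun _ _ => Nat.zero_le _) (mem_univ i)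

open scoped Classical in
theorem genFun_labeledPartition_mul_prod [Fintype α] (hα : Fintype.card α = n + 1)
    (hω : Injective ω) :
    genFun (fun x : {x // IsLabeledPartition ω x} => ∑ a, x.1 a) *
        ∏ i ∈ range (n + 1), (1 - X ^ (i + 1)) =
      ∑ w : {w : Fin (n + 1) ≃ α // StrictMono w.symm}, X ^ maj (descents (ω ∘ w.1)) := by
  rw [genFun_labeledPartition hα hω, mul_assoc, genFun_weight_mul_prod, mul_one]

end LabeledPartition

lemma descents_toDual {β : Type*} [LinearOrder β] {n : ℕ} {s : Fin (n + 1) → β}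
    (hs : Injective s) : descents (OrderDual.toDual ∘ s) = (descents s)ᶜ := by
  ext i
  have hne : s i.succ ≠ s i.castSucc := hs.ne Fin.castSucc_lt_succ.ne'
  simp [descents, hne.symm.le_iff_lt]

lemma maj_compl {n : ℕ} (S : Finset (Fin n)) :
    maj Sᶜ = maj (univ : Finset (Fin n)) - maj S := by
  rw [maj, maj, maj, ← sum_compl_add_sum S]
  omega

lemma maj_univ (n : ℕ) : maj (univ : Finset (Fin n)) = (n + 1) * n / 2 := by
  have := sum_range_id (n + 1)
  rw [sum_range_succ'] at this
  simpa [maj, Fin.sum_univ_eq_sum_range (fun i => i + 1)] using this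

lemma maj_le {n : ℕ} (S : Finset (Fin n)) : maj S ≤ (n + 1) * n / 2 :=
  maj_univ n ▸ sum_le_sum_of_subset (subset_univ S)

lemma reciprocity_of_eq_sum_X_pow {ι : Type*} [Fintype ι] (e : ι → ℕ) {N : ℕ}
    (he : ∀ i, e i ≤ N) {A B : PowerSeries ℤ} (hA : A = ∑ i, X ^ e i)
    (hB : B = ∑ i, X ^ (N - e i)) :
    (∀ k, N < k → coeff k A = 0 ∧ coeff k B = 0) ∧ (∀ k ≤ N, coeff k B = coeff (N - k) A) := by
  subst hA hB
  simp only [map_sum, coeff_X_pow]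
  refine ⟨fun k hk => ⟨sum_eq_zero fun i _ => if_neg ?_, sum_eq_zero fun i _ => if_neg ?_⟩,
    fun k hk => sum_congr rfl fun i _ => if_congr ?_ rfl rfl⟩ <;>
  · have := he i
    omega

end PPartition

open PPartition in
/-- **Stanley's P-partition reciprocity.** Let `Π` be a finite poset with `d` elements,
`p_Π(t)` the number of `Π`-partitions of `t` (order-reversing maps `Π → ℤ_{≥0}` with entry
sum `t`), and `p_Π°(t)` the number of strict `Π`-partitions of `t`. Setting
`A(z) = P_Π(z) ∏_{i=1}^d (1-z^i)` and `B(z) = P_Π°(z) ∏_{i=1}^d (1-z^i)`, both `A` and `B`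
are polynomials of degree at most `d(d-1)/2`, and `B(z) = z^{d(d-1)/2} A(1/z)`
coefficientwise. This is the reciprocity `P_Π(1/z) = (-z)^{|Π|} P_Π°(z)`. -/
theorem ppartition_reciprocity {α : Type*} [Fintype α] [PartialOrder α]
    (d : ℕ) (hd : Fintype.card α = d)
    (A B : PowerSeries ℤ)
    (hA : A = (PowerSeries.mk fun t =>
        (Nat.card {x : α → ℕ // (∀ a b : α, a ≤ b → x b ≤ x a) ∧ ∑ a, x a = t} : ℤ))
      * ∏ i ∈ Finset.range d, (1 - PowerSeries.X ^ (i + 1)))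
    (hB : B = (PowerSeries.mk fun t =>
        (Nat.card {x : α → ℕ // (∀ a b : α, a < b → x b < x a) ∧ ∑ a, x a = t} : ℤ))
      * ∏ i ∈ Finset.range d, (1 - PowerSeries.X ^ (i + 1))) :
    (∀ k : ℕ, d * (d - 1) / 2 < k →
      PowerSeries.coeff k A = 0 ∧ PowerSeries.coeff k B = 0) ∧
    (∀ k : ℕ, k ≤ d * (d - 1) / 2 →
      PowerSeries.coeff k B = PowerSeries.coeff (d * (d - 1) / 2 - k) A) := by
  classical
  obtain _ | n := d
  · have : IsEmpty α := Fintype.card_eq_zero_iff.1 hd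
    refine reciprocity_of_eq_sum_X_pow (ι := Unit) (fun _ => 0) (fun _ => le_rfl) ?_ ?_
    · rw [hA, ← genFun_subtype, genFun_sum_of_isEmpty _ (by simp)]
      simp
    · rw [hB, ← genFun_subtype, genFun_sum_of_isEmpty _ (by simp)]
      simp
  let ℓ : α → LinearExtension α := toLinearExtension
  have hℓinj : Injective ℓ := fun _ _ h => h
  have hℓ : StrictMono ℓ := toLinearExtension.monotone.strictMono_of_injective hℓinj
  have hdual (w : Fin (n + 1) ≃ α) : maj (descents ((OrderDual.toDual ∘ ℓ) ∘ w)) =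
      (n + 1) * n / 2 - maj (descents (ℓ ∘ w)) := by
    rw [comp_assoc, descents_toDual (hℓinj.comp w.injective), maj_compl, maj_univ]
  simp only [Nat.add_sub_cancel]
  refine reciprocity_of_eq_sum_X_pow (ι := {w : Fin (n + 1) ≃ α // StrictMono w.symm})
    (fun w => maj (descents (ℓ ∘ w.1))) (fun _ => maj_le _) ?_ ?_
  · rw [hA, ← genFun_labeledPartition_mul_prod hd hℓinj, genFun_subtype]
    simp_rw [isLabeledPartition_iff_antitone hℓ]
  · simp_rw [← hdual]
    rw [hB, ← genFun_labeledPartition_mul_prod hd (OrderDual.toDual.injective.comp hℓinj),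
      genFun_subtype]
    simp_rw [isLabeledPartition_iff_strictAnti hℓ.dual_right]
end

section
/- Let G = (V,E) be a finite simple graph and let H_G = {x ∈ ℝ^V : x_i = x_j}_{ij ∈ E} be its graphical arrangement. Then there is a bijection between the regions of H_G (connected components of ℝ^V \ ⋃H_G) and the acyclic orientations of G: each region R corresponds to the orientation that directs each edge ij ∈ E from i to j exactly when x_i < x_j holds for all x ∈ R, and this correspondence is a bijection onto the set of acyclic orientations of G. -/
/-!
Every point `y` off the graphical arrangement orients each edge towards its larger coordinate,
and the region of `y` is exactly the open cone `{x | x i < x j whenever i → j}` of that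
orientation: the cone is convex, hence connected, and avoids the arrangement, while on the
connected region no coordinate difference along an edge can change sign. So regions and cones
of realisable orientations correspond. An orientation is realisable by a point iff it is
acyclic: a point orders the vertices strictly along the edges, and conversely, for an acyclic
orientation, the number of vertices from which a directed path reaches `i` increases strictly
along every edge.
-/

theorem IsPreconnected.lt_of_lt_of_forall_ne {X α : Type*} [TopologicalSpace X]
    [LinearOrder α] [TopologicalSpace α] [OrderClosedTopology α] {s : Set X}
    (hs : IsPreconnected s) {f g : X → α} (hf : ContinuousOn f s) (hg : ContinuousOn g s)
    (hne : ∀ x ∈ s, f x ≠ g x) {a b : X} (ha : a ∈ s) (hb : b ∈ s) (hab : f a < g a) :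
    f b < g b := by
  by_contra! hba
  obtain ⟨x, hx, hfg⟩ := hs.intermediate_value₂ ha hb hf hg hab.le hba
  exact hne x hx hfg

theorem Relation.exists_nat_lt_of_irrefl_transGen {α : Type*} [Finite α] {r : α → α → Prop}
    (h : ∀ a, ¬ TransGen r a a) : ∃ f : α → ℕ, ∀ a b, r a b → f a < f b := by
  refine ⟨fun a => {c | TransGen r c a}.ncard, fun a b hab => Set.ncard_lt_ncard ?_⟩
  refine Set.ssubset_iff_of_subset (fun c hc => TransGen.tail hc hab) |>.mpr ?_
  exact ⟨a, TransGen.single hab, h a⟩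

section GraphicalArrangement

variable {V : Type*} (G : SimpleGraph V)

def graphicalArrangementCompl : Set (V → ℝ) := {x | ∀ i j, G.Adj i j → x i ≠ x j}

def graphicalArrangementRegions : Set (Set (V → ℝ)) :=
  {R | ∃ y ∈ graphicalArrangementCompl G,
    R = connectedComponentIn (graphicalArrangementCompl G) y}

def regionOrientation (R : Set (V → ℝ)) (i j : V) : Prop := G.Adj i j ∧ ∀ x ∈ R, x i < x j

def ascendingOrientation {α : Type*} [LT α] (y : V → α) (i j : V) : Prop :=
  G.Adj i j ∧ y i < y j

def orientationCone (o : V → V → Prop) : Set (V → ℝ) := {x | ∀ i j, o i j → x i < x j}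

variable {G}

theorem isOrientationOf_ascendingOrientation {α : Type*} [LinearOrder α] {y : V → α}
    (hy : ∀ i j, G.Adj i j → y i ≠ y j) : IsOrientationOf G (ascendingOrientation G y) :=
  ⟨fun _ _ h => h.1, fun i j hij =>
    ⟨fun h h' => h.2.not_gt h'.2,
      fun h => ⟨hij, (hy i j hij).lt_or_gt.resolve_right fun h' => h ⟨hij.symm, h'⟩⟩⟩⟩

theorem isAcyclicOrientation_of_forall_lt {α : Type*} [Preorder α] {o : V → V → Prop}
    {y : V → α} (ho : IsOrientationOf G o) (hy : ∀ i j, o i j → y i < y j) :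
    IsAcyclicOrientation G o :=
  ⟨ho, fun i hi => lt_irrefl (y i) <| by
    simpa only [Relation.transGen_eq_self] using hi.lift y hy⟩

theorem convex_orientationCone (o : V → V → Prop) : Convex ℝ (orientationCone o) := by
  have convex_lt (i j : V) : Convex ℝ {x : V → ℝ | x i < x j} := by
    have := convex_halfSpace_gt
      (LinearMap.proj (R := ℝ) (φ := fun _ : V => ℝ) j - LinearMap.proj i).isLinear 0
    simpa only [LinearMap.sub_apply, LinearMap.coe_proj, Function.eval, sub_pos] using this
  simpa only [orientationCone, Set.ofPred_forall] using
    convex_iInter fun i => convex_iInter fun j => convex_iInter fun _ => convex_lt i j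

theorem orientationCone_subset_graphicalArrangementCompl {o : V → V → Prop}
    (ho : IsOrientationOf G o) : orientationCone o ⊆ graphicalArrangementCompl G := by
  intro x hx i j hij
  by_cases h : o i j
  · exact (hx i j h).ne
  · exact (hx j i ((ho.2 j i hij.symm).mpr h)).ne'

theorem connectedComponentIn_eq_orientationCone {o : V → V → Prop} (ho : IsOrientationOf G o)
    {y : V → ℝ} (hy : y ∈ orientationCone o) :
    connectedComponentIn (graphicalArrangementCompl G) y = orientationCone o := by
  have hcone := orientationCone_subset_graphicalArrangementCompl ho
  refine subset_antisymm (fun x hx i j hij => ?_)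
    ((convex_orientationCone o).isPreconnected.subset_connectedComponentIn hy hcone)
  exact isPreconnected_connectedComponentIn.lt_of_lt_of_forall_ne
    (continuous_apply i).continuousOn (continuous_apply j).continuousOn
    (fun z hz => connectedComponentIn_subset (graphicalArrangementCompl G) y hz i j
      (ho.1 i j hij))
    (mem_connectedComponentIn (hcone hy)) hx (hy i j hij)

theorem regionOrientation_orientationCone {o : V → V → Prop} (ho : IsOrientationOf G o)
    (hne : (orientationCone o).Nonempty) : regionOrientation G (orientationCone o) = o := by
  obtain ⟨y, hy⟩ := hne
  ext i j
  refine ⟨fun ⟨hij, hlt⟩ => ?_, fun h => ⟨ho.1 i j h, fun x hx => hx i j h⟩⟩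
  by_contra h
  exact (hlt y hy).not_gt (hy j i ((ho.2 j i hij.symm).mpr h))

theorem exists_isAcyclicOrientation_of_mem_graphicalArrangementCompl {y : V → ℝ}
    (hy : y ∈ graphicalArrangementCompl G) :
    ∃ o, IsAcyclicOrientation G o ∧ y ∈ orientationCone o := by
  have ho := isOrientationOf_ascendingOrientation hy
  exact ⟨_, isAcyclicOrientation_of_forall_lt ho fun _ _ h => h.2, fun _ _ h => h.2⟩

theorem IsAcyclicOrientation.orientationCone_nonempty [Finite V] {o : V → V → Prop}
    (ho : IsAcyclicOrientation G o) : (orientationCone o).Nonempty := by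
  obtain ⟨f, hf⟩ := Relation.exists_nat_lt_of_irrefl_transGen ho.2
  exact ⟨fun i => f i, fun i j h => Nat.cast_lt.mpr (hf i j h)⟩

variable (G) in
theorem bijOn_regionOrientation [Finite V] :
    Set.BijOn (regionOrientation G) (graphicalArrangementRegions G)
      {o | IsAcyclicOrientation G o} := by
  refine Set.InvOn.bijOn (f' := orientationCone) ⟨?_, fun o ho => ?_⟩ ?_ fun o ho => ?_
  · rintro _ ⟨y, hy, rfl⟩
    obtain ⟨o, ho, hyo⟩ := exists_isAcyclicOrientation_of_mem_graphicalArrangementCompl hy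
    rw [connectedComponentIn_eq_orientationCone ho.1 hyo,
      regionOrientation_orientationCone ho.1 ⟨y, hyo⟩]
  · exact regionOrientation_orientationCone ho.1 ho.orientationCone_nonempty
  · rintro _ ⟨y, hy, rfl⟩
    obtain ⟨o, ho, hyo⟩ := exists_isAcyclicOrientation_of_mem_graphicalArrangementCompl hy
    rwa [connectedComponentIn_eq_orientationCone ho.1 hyo,
      regionOrientation_orientationCone ho.1 ⟨y, hyo⟩]
  · obtain ⟨y, hy⟩ := ho.orientationCone_nonempty
    exact ⟨y, orientationCone_subset_graphicalArrangementCompl ho.1 hy,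
      (connectedComponentIn_eq_orientationCone ho.1 hy).symm⟩

end GraphicalArrangement

/-- **Greene's lemma.** The regions of the graphical arrangement `H_G` of a finite simple
graph `G` (connected components of `ℝ^V ∖ ⋃ H_G`) are in bijection with the acyclic
orientations of `G`, where a region `R` corresponds to the orientation that directs the edge
`ij` from `i` to `j` exactly when `x_i < x_j` for all `x ∈ R`. -/
theorem greene_regions_acyclic_orientations {V : Type*} [Fintype V] (G : SimpleGraph V) :
    Set.BijOn (fun R : Set (V → ℝ) => fun i j : V => G.Adj i j ∧ ∀ x ∈ R, x i < x j)
      {R : Set (V → ℝ) | ∃ y ∈ {x : V → ℝ | ∀ i j, G.Adj i j → x i ≠ x j},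
        R = connectedComponentIn {x : V → ℝ | ∀ i j, G.Adj i j → x i ≠ x j} y}
      {o : V → V → Prop | IsAcyclicOrientation G o} :=
  bijOn_regionOrientation G
end

section
/- Let Π be a naturally labeled poset on {1,…,d}, i.e., a partial order ⪯ on {1,…,d} such that j ⪯ k implies j ≤ k. Then, as an identity of formal power series in z with integer coefficients, (Σ_{t≥0} p_Π(t) z^t) · Π_{i=1}^d (1 − z^i) = Σ_σ z^{maj σ}, where the sum on the right is over all permutations σ of {1,…,d} whose associated chain is a linear extension of Π, i.e., such that j ⪯ k implies σ^{−1}(j) ≤ σ^{−1}(k). -/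
/-!
Every `x : Fin d → ℕ` is compatible with exactly one permutation `σ`, the one listing the
coordinates by decreasing value of `x`, ties broken by increasing index; when the poset is
naturally labeled, `x` is a Π-partition iff this `σ` is a linear extension. Subtracting from
`x ∘ σ` the number of descents of `σ` at or after each position is a bijection from the
`σ`-compatible vectors onto the weakly decreasing ones which lowers the size by `maj σ`.
Finally, weakly decreasing vectors of length `d` have generating function
`∏_{i=1}^d (1 - z^i)⁻¹`: according to whether the last entry vanishes, such a vector is either
one of length `d - 1` padded by `0`, or one of length `d` plus the all-ones vector.
-/

open scoped Classical

/-- A descent between the 0-based positions `i` and `i + 1` contributes `i + 1`. -/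
def majIdx {d : ℕ} (σ : Equiv.Perm (Fin d)) : ℕ :=
  ∑ i : Fin d, if h : (i : ℕ) + 1 < d then
    (if σ ⟨(i : ℕ) + 1, h⟩ < σ i then (i : ℕ) + 1 else 0) else 0

open PowerSeries

section WeightGenFun

variable {α β : Type*}

noncomputable def weightGenFun (w : α → ℕ) : PowerSeries ℤ :=
  mk fun t => Nat.card {a // w a = t}

lemma coeff_weightGenFun (w : α → ℕ) (t : ℕ) :
    coeff t (weightGenFun w) = Nat.card {a // w a = t} :=
  coeff_mk _ _

lemma weightGenFun_subtype (P : α → Prop) (w : α → ℕ) :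
    weightGenFun (fun a : {a // P a} => w a) =
      mk fun t => (Nat.card {a // P a ∧ w a = t} : ℤ) := by
  ext t
  rw [coeff_weightGenFun, coeff_mk,
    Nat.card_congr (Equiv.subtypeSubtypeEquivSubtypeInter P (w · = t))]

lemma weightGenFun_congr {w : α → ℕ} {v : β → ℕ} (e : α ≃ β) (h : ∀ a, v (e a) = w a) :
    weightGenFun v = weightGenFun w := by
  ext t
  rw [coeff_weightGenFun, coeff_weightGenFun,
    Nat.card_congr (e.subtypeEquiv fun a => by rw [h] : {a // w a = t} ≃ {b // v b = t})]

lemma weightGenFun_add_const (w : α → ℕ) (m : ℕ) :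
    weightGenFun (fun a => w a + m) = X ^ m * weightGenFun w := by
  ext t
  rw [coeff_weightGenFun, coeff_X_pow_mul', coeff_weightGenFun]
  split_ifs with hm
  · exact congrArg _ (Nat.card_congr (Equiv.subtypeEquivRight fun a => by omega))
  · have : IsEmpty {a // w a + m = t} := ⟨fun a => hm (by omega)⟩
    rw [Nat.card_of_isEmpty, Nat.cast_zero]

lemma weightGenFun_eq_add_compl (w : α → ℕ) (p : α → Prop) [∀ t, Finite {a // w a = t}] :
    weightGenFun w =
      weightGenFun (fun a : {a // p a} => w a) + weightGenFun (fun a : {a // ¬ p a} => w a) := by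
  ext t
  have e (q : α → Prop) : {b : {a // w a = t} // q b} ≃ {a : {a // q a} // w a = t} :=
    (Equiv.subtypeSubtypeEquivSubtypeInter _ q).trans
      ((Equiv.subtypeEquivRight fun _ => and_comm).trans
        (Equiv.subtypeSubtypeEquivSubtypeInter q _).symm)
  rw [map_add, coeff_weightGenFun, coeff_weightGenFun, coeff_weightGenFun,
    ← Nat.card_congr (Equiv.sumCompl fun b : {a // w a = t} => p b), Nat.card_sum,
    Nat.card_congr (e p), Nat.card_congr (e fun a => ¬ p a), Nat.cast_add]

lemma weightGenFun_sigma {ι : Type*} [Fintype ι] {β : ι → Type*} (w : ∀ i, β i → ℕ)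
    [∀ i t, Finite {b // w i b = t}] :
    weightGenFun (fun p : Σ i, β i => w p.1 p.2) = ∑ i, weightGenFun (w i) := by
  ext t
  let e : {p : Σ i, β i // w p.1 p.2 = t} ≃ Σ i, {b // w i b = t} :=
    { toFun := fun p => ⟨p.1.1, p.1.2, p.2⟩
      invFun := fun p => ⟨⟨p.1, p.2.1⟩, p.2.2⟩
      left_inv := fun _ => rfl
      right_inv := fun _ => rfl }
  simp only [map_sum, coeff_weightGenFun, Nat.card_congr e, Nat.card_sigma, Nat.cast_sum]

end WeightGenFun

instance {d : ℕ} (P : (Fin d → ℕ) → Prop) (t : ℕ) :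
    Finite {x : {x // P x} // ∑ i, x.1 i = t} :=
  Finite.of_injective
    (fun x => (⟨x.1.1, Finset.Nat.mem_antidiagonalTuple.2 x.2⟩ : Finset.Nat.antidiagonalTuple d t))
    fun _ _ h => Subtype.ext <| Subtype.ext <| by simpa using h

namespace Fin

variable {α : Type*} [Preorder α] {d : ℕ} {f : Fin d → α}

lemma strictMono_iff_lt_succ' :
    StrictMono f ↔ ∀ (i : Fin d) (hi : i.val + 1 < d), f i < f ⟨i + 1, hi⟩ := by
  cases d with
  | zero => exact ⟨fun _ i => i.elim0, fun _ i => i.elim0⟩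
  | succ n =>
    rw [strictMono_iff_lt_succ]
    exact ⟨fun h i hi => h ⟨i, by omega⟩, fun h i => h i.castSucc (by simp)⟩

lemma antitone_iff_succ_le' :
    Antitone f ↔ ∀ (i : Fin d) (hi : i.val + 1 < d), f ⟨i + 1, hi⟩ ≤ f i := by
  cases d with
  | zero => exact ⟨fun _ i => i.elim0, fun _ i => i.elim0⟩
  | succ n =>
    rw [antitone_iff_succ_le]
    exact ⟨fun h i hi => h ⟨i, by omega⟩, fun h i => h i.castSucc (by simp)⟩

lemma antitone_snoc_zero {z : Fin d → ℕ} (hz : Antitone z) :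
    Antitone (snoc z 0 : Fin (d + 1) → ℕ) := by
  intro i j hij
  induction j using lastCases with
  | last => simp
  | cast j =>
    obtain ⟨i, rfl⟩ | rfl := i.eq_castSucc_or_eq_last
    · simpa using hz (castSucc_le_castSucc_iff.1 hij)
    · exact absurd hij (not_le.2 (castSucc_lt_last j))

end Fin

open Finset

section Descents

variable {d : ℕ} (σ : Equiv.Perm (Fin d))

def descent (i : Fin d) : ℕ :=
  if h : i.val + 1 < d then if σ ⟨i + 1, h⟩ < σ i then 1 else 0 else 0

def descentsFrom (i : Fin d) : ℕ :=
  ∑ j ∈ Ici i, descent σ j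

lemma majIdx_eq_sum_descentsFrom : majIdx σ = ∑ i, descentsFrom σ i := by
  calc majIdx σ = ∑ j, (j.val + 1) * descent σ j := by
        refine sum_congr rfl fun j _ => ?_
        unfold descent
        split_ifs <;> simp
    _ = ∑ j, ∑ i ∈ Iic j, descent σ j := by simp [Fin.card_Iic]
    _ = ∑ i, descentsFrom σ i :=
        (sum_comm' fun j i => by simp).symm

lemma descentsFrom_eq_add (i : Fin d) (h : i.val + 1 < d) :
    descentsFrom σ i = descent σ i + descentsFrom σ ⟨i + 1, h⟩ := by
  have : Ioi i = Ici ⟨i + 1, h⟩ := by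
    ext j
    simp only [mem_Ioi, mem_Ici, Fin.lt_def, Fin.le_def]
    omega
  rw [descentsFrom, Ici_eq_cons_Ioi, sum_cons, this, descentsFrom]

lemma descentsFrom_eq_zero (i : Fin d) (h : ¬ i.val + 1 < d) : descentsFrom σ i = 0 :=
  sum_eq_zero fun j hj => dif_neg fun hj' => h (by rw [mem_Ici, Fin.le_def] at hj; omega)

end Descents

section Compatible

variable {d : ℕ}

def sortKey (x : Fin d → ℕ) (j : Fin d) : ℕᵒᵈ ×ₗ Fin d :=
  toLex (OrderDual.toDual (x j), j)

variable {x : Fin d → ℕ} {j k : Fin d}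

lemma sortKey_injective (x : Fin d → ℕ) : Function.Injective (sortKey x) :=
  fun _ _ h => congrArg (fun p => (ofLex p).2) h

lemma sortKey_le_sortKey_iff : sortKey x j ≤ sortKey x k ↔ x k < x j ∨ x j = x k ∧ j ≤ k :=
  Prod.Lex.toLex_le_toLex

lemma sortKey_lt_sortKey_iff : sortKey x j < sortKey x k ↔ x k < x j ∨ x j = x k ∧ j < k :=
  Prod.Lex.toLex_lt_toLex

/-- Stanley's `σ`-compatibility: `x ∘ σ` is weakly decreasing, strictly at the descents of `σ`
(`isCompatible_iff_succ`). Phrased through `sortKey`, it says that `σ` sorts `x`. -/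
def IsCompatible (σ : Equiv.Perm (Fin d)) (x : Fin d → ℕ) : Prop :=
  StrictMono (sortKey x ∘ σ)

variable {σ τ : Equiv.Perm (Fin d)}

lemma isCompatible_sort (x : Fin d → ℕ) : IsCompatible (Tuple.sort (sortKey x)) x :=
  (Tuple.monotone_sort _).strictMono_of_injective ((sortKey_injective x).comp (Equiv.injective _))

lemma IsCompatible.unique (hσ : IsCompatible σ x) (hτ : IsCompatible τ x) : σ = τ :=
  Equiv.ext fun i =>
    sortKey_injective x (congrFun (Tuple.unique_monotone hσ.monotone hτ.monotone) i)

lemma IsCompatible.symm_le_symm_iff (hσ : IsCompatible σ x) :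
    σ.symm j ≤ σ.symm k ↔ sortKey x j ≤ sortKey x k := by
  simpa using (hσ.le_iff_le (a := σ.symm j) (b := σ.symm k)).symm

lemma isCompatible_iff_succ : IsCompatible σ x ↔
    ∀ (i : Fin d) (h : i.val + 1 < d), x (σ ⟨i + 1, h⟩) + descent σ i ≤ x (σ i) := by
  rw [IsCompatible, Fin.strictMono_iff_lt_succ']
  refine forall₂_congr fun i h => ?_
  have hne : σ i ≠ σ ⟨i + 1, h⟩ := σ.injective.ne (by simp [Fin.ext_iff])
  simp only [Function.comp_apply, sortKey_lt_sortKey_iff, descent, dif_pos h]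
  split_ifs with hd
  · simp only [hd.not_gt, and_false, or_false]
    omega
  · simp only [lt_of_le_of_ne (not_lt.1 hd) hne, and_true]
    omega

lemma IsCompatible.descentsFrom_le (hσ : IsCompatible σ x) (i : Fin d) :
    descentsFrom σ i ≤ x (σ i) := by
  -- `x ∘ σ - descentsFrom σ` is antitone and its last value is `x (σ (d - 1)) ≥ 0`.
  have hu : Antitone fun j => (x (σ j) : ℤ) - descentsFrom σ j :=
    Fin.antitone_iff_succ_le'.2 fun j hj => by
      have := isCompatible_iff_succ.1 hσ j hj
      rw [descentsFrom_eq_add σ j hj]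
      push_cast
      omega
  have hd : d - 1 < d := by have := i.2; omega
  have hlast := hu (show i ≤ ⟨d - 1, hd⟩ from Fin.le_def.2 (Nat.le_sub_one_of_lt i.2))
  simp only [descentsFrom_eq_zero σ ⟨d - 1, hd⟩ (by simp; omega)] at hlast
  omega

end Compatible

section LinearExtensions

variable {d : ℕ} (r : Fin d → Fin d → Prop)

abbrev IsPPartition (x : Fin d → ℕ) : Prop :=
  ∀ j k, r j k → x k ≤ x j

def IsLinearExtension (σ : Equiv.Perm (Fin d)) : Prop :=
  ∀ j k, r j k → σ.symm j ≤ σ.symm k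

variable {r}

lemma IsCompatible.isPPartition_iff {σ : Equiv.Perm (Fin d)} {x : Fin d → ℕ}
    (hnat : ∀ j k, r j k → j ≤ k) (hσ : IsCompatible σ x) :
    IsPPartition r x ↔ IsLinearExtension r σ := by
  refine forall₃_congr fun j k hjk => ?_
  rw [hσ.symm_le_symm_iff, sortKey_le_sortKey_iff]
  refine ⟨fun h => ?_, ?_⟩
  · rcases h.lt_or_eq with h | h
    exacts [Or.inl h, Or.inr ⟨h.symm, hnat j k hjk⟩]
  · rintro (h | ⟨h, -⟩)
    exacts [h.le, h.ge]

def pPartitionEquivSigmaCompatible (hnat : ∀ j k, r j k → j ≤ k) :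
    {x // IsPPartition r x} ≃ Σ σ : {σ // IsLinearExtension r σ}, {x // IsCompatible σ.1 x} where
  toFun x := ⟨⟨_, ((isCompatible_sort x.1).isPPartition_iff hnat).1 x.2⟩, _, isCompatible_sort x.1⟩
  invFun p := ⟨p.2.1, (p.2.2.isPPartition_iff hnat).2 p.1.2⟩
  left_inv _ := rfl
  right_inv := by
    rintro ⟨⟨σ, hσ⟩, x, hx⟩
    obtain rfl := hx.unique (isCompatible_sort x)
    rfl

lemma weightGenFun_pPartition (hnat : ∀ j k, r j k → j ≤ k) :
    weightGenFun (fun x : {x // IsPPartition r x} => ∑ i, x.1 i) =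
      ∑ σ ∈ univ.filter (IsLinearExtension r),
        weightGenFun (fun x : {x // IsCompatible σ x} => ∑ i, x.1 i) := by
  calc _ = weightGenFun fun p : Σ σ : {σ // IsLinearExtension r σ}, {x // IsCompatible σ.1 x} =>
          ∑ i, p.2.1 i :=
        weightGenFun_congr (pPartitionEquivSigmaCompatible hnat).symm fun _ => rfl
    _ = ∑ σ : {σ // IsLinearExtension r σ},
          weightGenFun (fun x : {x // IsCompatible σ.1 x} => ∑ i, x.1 i) :=
        weightGenFun_sigma
          fun (σ : {σ // IsLinearExtension r σ}) (x : {x // IsCompatible σ.1 x}) => ∑ i, x.1 i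
    _ = _ := (sum_subtype _ mem_filter_univ fun σ =>
          weightGenFun fun x : {x // IsCompatible σ x} => ∑ i, x.1 i).symm

end LinearExtensions

section CompatibleEquiv

variable {d : ℕ} (σ : Equiv.Perm (Fin d))

def compatibleEquivAntitone : {x // IsCompatible σ x} ≃ {y : Fin d → ℕ // Antitone y} where
  toFun x := ⟨fun i => x.1 (σ i) - descentsFrom σ i, Fin.antitone_iff_succ_le'.2 fun i h => by
    have := isCompatible_iff_succ.1 x.2 i h
    rw [descentsFrom_eq_add σ i h]
    omega⟩
  invFun y := ⟨fun j => y.1 (σ.symm j) + descentsFrom σ (σ.symm j),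
    isCompatible_iff_succ.2 fun i h => by
      have := y.2 (show i ≤ ⟨i + 1, h⟩ from Fin.le_def.2 (Nat.le_succ _))
      simp only [Equiv.symm_apply_apply, descentsFrom_eq_add σ i h]
      omega⟩
  left_inv x := Subtype.ext <| funext fun j => by
    have := x.2.descentsFrom_le (σ.symm j)
    simp only [Equiv.apply_symm_apply] at this ⊢
    omega
  right_inv y := Subtype.ext <| funext fun i => by simp

lemma sum_eq_sum_compatibleEquivAntitone_add (x : {x // IsCompatible σ x}) :
    ∑ i, x.1 i = ∑ i, (compatibleEquivAntitone σ x).1 i + majIdx σ := by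
  rw [majIdx_eq_sum_descentsFrom, ← sum_add_distrib, ← Equiv.sum_comp σ]
  exact sum_congr rfl fun i _ => (Nat.sub_add_cancel (x.2.descentsFrom_le i)).symm

lemma weightGenFun_compatible :
    weightGenFun (fun x : {x // IsCompatible σ x} => ∑ i, x.1 i) =
      X ^ majIdx σ * weightGenFun (fun y : {y : Fin d → ℕ // Antitone y} => ∑ i, y.1 i) := by
  rw [← weightGenFun_add_const]
  exact (weightGenFun_congr (compatibleEquivAntitone σ)
    fun x => (sum_eq_sum_compatibleEquivAntitone_add σ x).symm).symm

end CompatibleEquiv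

section Antitone

open Fin in
def antitoneSnocZeroEquiv (d : ℕ) :
    {z : Fin d → ℕ // Antitone z} ≃
      {y : {y : Fin (d + 1) → ℕ // Antitone y} // y.1 (last d) = 0} where
  toFun z := ⟨⟨snoc z.1 0, antitone_snoc_zero z.2⟩, snoc_last (α := fun _ => ℕ) _ _⟩
  invFun y := ⟨init y.1.1, y.1.2.comp_monotone strictMono_castSucc.monotone⟩
  left_inv z := Subtype.ext (init_snoc (α := fun _ => ℕ) _ _)
  right_inv y := Subtype.ext <| Subtype.ext <| by
    conv_rhs => rw [← snoc_init_self y.1.1, y.2]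

def antitoneAddOneEquiv (d : ℕ) :
    {y : Fin (d + 1) → ℕ // Antitone y} ≃
      {y : {y : Fin (d + 1) → ℕ // Antitone y} // y.1 (Fin.last d) ≠ 0} where
  toFun y := ⟨⟨fun i => y.1 i + 1, fun _ _ h => Nat.add_le_add_right (y.2 h) 1⟩, by simp⟩
  invFun y := ⟨fun i => y.1.1 i - 1, fun _ _ h => Nat.sub_le_sub_right (y.1.2 h) 1⟩
  left_inv y := Subtype.ext <| funext fun i => Nat.add_sub_cancel _ _
  right_inv y := Subtype.ext <| Subtype.ext <| funext fun i => by
    have := y.1.2 (Fin.le_last i)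
    have := y.2
    dsimp only
    omega

lemma weightGenFun_antitone_zero :
    weightGenFun (fun y : {y : Fin 0 → ℕ // Antitone y} => ∑ i, y.1 i) = 1 := by
  ext t
  rw [coeff_weightGenFun, coeff_one]
  simp only [univ_eq_empty, sum_empty]
  split_ifs with ht
  · subst ht
    rw [Nat.cast_eq_one, Nat.card_eq_one_iff_unique]
    exact ⟨inferInstance, ⟨⟨⟨Fin.elim0, fun i => Fin.elim0 i⟩, rfl⟩⟩⟩
  · have : IsEmpty {y : {y : Fin 0 → ℕ // Antitone y} // 0 = t} := ⟨fun y => ht y.2.symm⟩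
    rw [Nat.card_of_isEmpty, Nat.cast_zero]

lemma weightGenFun_antitone_succ (d : ℕ) :
    weightGenFun (fun y : {y : Fin (d + 1) → ℕ // Antitone y} => ∑ i, y.1 i) =
      weightGenFun (fun y : {y : Fin d → ℕ // Antitone y} => ∑ i, y.1 i) +
        X ^ (d + 1) * weightGenFun (fun y : {y : Fin (d + 1) → ℕ // Antitone y} => ∑ i, y.1 i) := by
  conv_lhs => rw [weightGenFun_eq_add_compl _ fun y : {y // Antitone y} => y.1 (Fin.last d) = 0]
  congr 1
  · exact weightGenFun_congr (antitoneSnocZeroEquiv d) fun z => by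
      simp [antitoneSnocZeroEquiv, Fin.sum_univ_castSucc]
  · rw [← weightGenFun_add_const]
    exact weightGenFun_congr (antitoneAddOneEquiv d) fun y => by
      simp [antitoneAddOneEquiv, sum_add_distrib]

lemma weightGenFun_antitone_mul_prod (d : ℕ) :
    weightGenFun (fun y : {y : Fin d → ℕ // Antitone y} => ∑ i, y.1 i) *
      ∏ i ∈ range d, (1 - X ^ (i + 1)) = 1 := by
  induction d with
  | zero => rw [weightGenFun_antitone_zero, prod_range_zero, mul_one]
  | succ d ih =>
    rw [prod_range_succ]
    linear_combination (∏ i ∈ range d, (1 - X ^ (i + 1) : PowerSeries ℤ)) *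
      weightGenFun_antitone_succ d + ih

end Antitone

theorem ppartition_lemma_general (d : ℕ) (r : Fin d → Fin d → Prop)
    (hnat : ∀ j k, r j k → j ≤ k) :
    (PowerSeries.mk fun t =>
        (Nat.card {x : Fin d → ℕ // (∀ j k, r j k → x k ≤ x j) ∧ ∑ i, x i = t} : ℤ))
      * ∏ i ∈ Finset.range d, (1 - PowerSeries.X ^ (i + 1))
    = ∑ σ ∈ Finset.univ.filter
        (fun σ : Equiv.Perm (Fin d) => ∀ j k, r j k → σ.symm j ≤ σ.symm k),
        (PowerSeries.X : PowerSeries ℤ) ^ majIdx σ := by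
  rw [← weightGenFun_subtype (IsPPartition r) fun x => ∑ i, x i, weightGenFun_pPartition hnat,
    sum_mul]
  refine sum_congr (filter_congr fun _ _ => Iff.rfl) fun σ _ => ?_
  rw [weightGenFun_compatible, mul_assoc, weightGenFun_antitone_mul_prod, mul_one]

/-- **Stanley's P-partition lemma.** Let `⪯` (denoted `r`) be a naturally labeled partial
order on `{1,…,d}` (i.e. `j ⪯ k` implies `j ≤ k`). Then
`(∑_{t≥0} p_Π(t) z^t) ∏_{i=1}^d (1-z^i) = ∑_σ z^{maj σ}`,
the sum over all permutations `σ` whose associated chain is a linear extension of `Π`,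
i.e. such that `j ⪯ k` implies `σ⁻¹(j) ≤ σ⁻¹(k)`. -/
theorem ppartition_lemma (d : ℕ) (r : Fin d → Fin d → Prop)
    (hrefl : ∀ j, r j j) (htrans : ∀ j k l, r j k → r k l → r j l)
    (hantisymm : ∀ j k, r j k → r k j → j = k)
    (hnat : ∀ j k, r j k → j ≤ k) :
    (PowerSeries.mk fun t =>
        (Nat.card {x : Fin d → ℕ // (∀ j k, r j k → x k ≤ x j) ∧ ∑ i, x i = t} : ℤ))
      * ∏ i ∈ Finset.range d, (1 - PowerSeries.X ^ (i + 1))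
    = ∑ σ ∈ Finset.univ.filter
        (fun σ : Equiv.Perm (Fin d) => ∀ j k, r j k → σ.symm j ≤ σ.symm k),
        (PowerSeries.X : PowerSeries ℤ) ^ majIdx σ :=
  ppartition_lemma_general d r hnat
end

section
/- Let Δ ⊂ ℝ^d be a lattice d-simplex with vertices v_0, v_1, …, v_d ∈ ℤ^d, and let Q := {Σ_{i=0}^d λ_i (v_i, 1) : 0 ≤ λ_i < 1} ⊂ ℝ^{d+1} be the half-open fundamental parallelepiped of the cone over Δ. Then, as an identity of formal power series in z, (1 + Σ_{t≥1} #(tΔ ∩ ℤ^d) z^t) · (1−z)^{d+1} = Σ_{t=0}^{d} h_t z^t, where h_t := #{y ∈ ℤ^{d+1} ∩ Q : y_{d+1} = t} is the number of lattice points of Q at height t. In particular, the Ehrhart series of Δ is a rational function whose numerator is a polynomial of degree at most d with nonnegative integer coefficients. -/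
/-!
Every lattice point of the cone over `Δ` is uniquely `q + ∑ mᵢ (vᵢ, 1)` with `q` a lattice point
of `Q` and `m ∈ ℕ^{d+1}`: take `mᵢ = ⌊λᵢ⌋`, and uniqueness holds because the lifted vertices are
linearly independent. Heights add under this decomposition, so the height generating function of
the cone is that of `Q` times `(1 - z)^{-(d+1)}`. The cone's lattice points at height `t ≥ 1` are
those of `tΔ` lifted to height `t`, and `Q` has no lattice points at height `≥ d + 1` because
there `∑ λᵢ < d + 1`.
-/

open scoped Pointwise Classical
open Finset

noncomputable section

def fiberSeries {α : Type*} (f : α → ℕ) : PowerSeries ℤ :=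
  PowerSeries.mk fun t => (Nat.card {a // f a = t} : ℤ)

theorem fiberSeries_congr {α β : Type*} (e : α ≃ β) {f : α → ℕ} {g : β → ℕ}
    (h : ∀ a, g (e a) = f a) : fiberSeries f = fiberSeries g := by
  ext t
  simp only [fiberSeries, PowerSeries.coeff_mk]
  exact congrArg _ (Nat.card_congr (e.subtypeEquiv fun a => by rw [h]))

theorem fiberSeries_add {β γ : Type*} (g : β → ℕ) (h : γ → ℕ) [∀ t, Finite {b // g b = t}]
    [∀ t, Finite {c // h c = t}] :
    fiberSeries (fun p : β × γ => g p.1 + h p.2) = fiberSeries g * fiberSeries h := by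
  ext t
  let e : {p : β × γ // g p.1 + h p.2 = t} ≃
      Σ n : antidiagonal t, {b // g b = n.1.1} × {c // h c = n.1.2} :=
    { toFun := fun p => ⟨⟨(g p.1.1, h p.1.2), mem_antidiagonal.2 p.2⟩, ⟨p.1.1, rfl⟩, ⟨p.1.2, rfl⟩⟩
      invFun := fun n => ⟨(n.2.1, n.2.2), by rw [n.2.1.2, n.2.2.2]; exact mem_antidiagonal.1 n.1.2⟩
      left_inv := fun p => rfl
      right_inv := by
        rintro ⟨⟨⟨a, b⟩, hab⟩, ⟨x, hx : g x = a⟩, ⟨y, hy : h y = b⟩⟩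
        subst hx hy
        rfl }
  simp only [fiberSeries, PowerSeries.coeff_mk, PowerSeries.coeff_mul, Nat.card_congr e,
    Nat.card_sigma, Nat.card_prod]
  push_cast
  exact sum_coe_sort (antidiagonal t)
    fun n => (Nat.card {b // g b = n.1} : ℤ) * Nat.card {c // h c = n.2}

theorem fiberSeries_id : fiberSeries (fun n : ℕ => n) = PowerSeries.mk 1 := by
  ext t
  simp [fiberSeries]

instance finite_sum_eq {ι : Type*} [Fintype ι] (t : ℕ) : Finite {m : ι → ℕ // ∑ i, m i = t} :=
  Set.Finite.to_subtype <|
    (piAntidiag univ t).finite_toSet.subset fun _ hm => mem_piAntidiag.2 ⟨hm, by simp⟩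

theorem fiberSeries_sum_fin (n : ℕ) :
    fiberSeries (fun m : Fin n → ℕ => ∑ i, m i) = (PowerSeries.mk 1) ^ n := by
  induction n with
  | zero =>
    ext t
    simp only [fiberSeries, PowerSeries.coeff_mk, pow_zero, PowerSeries.coeff_one]
    split_ifs with ht
    · simp [ht]
    · simp [Ne.symm ht]
  | succ n ih =>
    rw [pow_succ', ← ih, ← fiberSeries_id, ← fiberSeries_add]
    exact fiberSeries_congr (Fin.consEquiv fun _ => ℕ).symm fun m => (Fin.sum_univ_succ m).symm

theorem fiberSeries_sum (ι : Type*) [Fintype ι] :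
    fiberSeries (fun m : ι → ℕ => ∑ i, m i) = (PowerSeries.mk 1) ^ Fintype.card ι := by
  rw [← fiberSeries_sum_fin]
  exact fiberSeries_congr ((Fintype.equivFin ι).arrowCongr (Equiv.refl ℕ))
    fun m => Equiv.sum_comp (Fintype.equivFin ι).symm m

def heightSeries {κ : Type*} (k : κ) (S : Set (κ → ℤ)) : PowerSeries ℤ :=
  PowerSeries.mk fun t => (Nat.card {y // y ∈ S ∧ y k = (t : ℤ)} : ℤ)

section Lattice

variable {ι κ : Type*} [Fintype ι] (W : ι → κ → ℤ)

def coneLattice : Set (κ → ℤ) :=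
  {y | ∃ c : ι → ℝ, (∀ i, 0 ≤ c i) ∧ (fun j => (y j : ℝ)) = ∑ i, c i • fun j => (W i j : ℝ)}

def parallelepipedLattice : Set (κ → ℤ) :=
  {y | ∃ c : ι → ℝ, (∀ i, 0 ≤ c i ∧ c i < 1) ∧
    (fun j => (y j : ℝ)) = ∑ i, c i • fun j => (W i j : ℝ)}

variable {W}

theorem cast_add_sum_nsmul (q : κ → ℤ) (m : ι → ℕ) :
    (fun j => ((q + ∑ i, m i • W i) j : ℝ)) =
      (fun j => (q j : ℝ)) + ∑ i, (m i : ℝ) • fun j => (W i j : ℝ) := by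
  ext j
  simp [Finset.sum_apply]

theorem add_sum_nsmul_mem_coneLattice {q : κ → ℤ} (hq : q ∈ parallelepipedLattice W)
    (m : ι → ℕ) : q + ∑ i, m i • W i ∈ coneLattice W := by
  obtain ⟨c, hc, hqc⟩ := hq
  refine ⟨c + fun i => (m i : ℝ), fun i => add_nonneg (hc i).1 (m i).cast_nonneg, ?_⟩
  rw [cast_add_sum_nsmul, hqc]
  simp only [Pi.add_apply, add_smul, sum_add_distrib]

theorem exists_add_sum_nsmul_eq {y : κ → ℤ} (hy : y ∈ coneLattice W) :
    ∃ q ∈ parallelepipedLattice W, ∃ m : ι → ℕ, q + ∑ i, m i • W i = y := by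
  obtain ⟨c, hc, hyc⟩ := hy
  set m : ι → ℕ := fun i => ⌊c i⌋₊
  refine ⟨y - ∑ i, m i • W i, ⟨c - fun i => (m i : ℝ), fun i => ⟨?_, ?_⟩, ?_⟩, m,
    sub_add_cancel _ _⟩
  · exact sub_nonneg.2 (Nat.floor_le (hc i))
  · exact sub_lt_iff_lt_add'.2 (Nat.lt_floor_add_one (c i))
  · have := cast_add_sum_nsmul (W := W) (y - ∑ i, m i • W i) m
    rw [sub_add_cancel, hyc] at this
    simp only [Pi.sub_apply, sub_smul, sum_sub_distrib, this, add_sub_cancel_right]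

theorem eq_of_add_sum_nsmul_eq (hW : LinearIndependent ℝ fun i j => (W i j : ℝ))
    {q q' : κ → ℤ} (hq : q ∈ parallelepipedLattice W) (hq' : q' ∈ parallelepipedLattice W)
    {m m' : ι → ℕ} (h : q + ∑ i, m i • W i = q' + ∑ i, m' i • W i) : m = m' := by
  obtain ⟨c, hc, hqc⟩ := hq
  obtain ⟨c', hc', hqc'⟩ := hq'
  have hcoeff : ∀ i, c i + m i = c' i + m' i := by
    refine Fintype.linearIndependent_iffₛ.1 hW _ _ ?_
    have := congrArg (fun y j => (y j : ℝ)) h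
    simp only [cast_add_sum_nsmul, hqc, hqc'] at this
    simpa only [add_smul, sum_add_distrib] using this
  have hfloor : ∀ {a : ℝ} (n : ℕ), 0 ≤ a → a < 1 → ⌊a + n⌋₊ = n := fun n ha ha1 => by
    rw [Nat.floor_add_natCast ha, Nat.floor_eq_zero.2 ha1, zero_add]
  funext i
  rw [← hfloor (m i) (hc i).1 (hc i).2, hcoeff, hfloor (m' i) (hc' i).1 (hc' i).2]

def parallelepipedLatticeProdEquiv (hW : LinearIndependent ℝ fun i j => (W i j : ℝ)) :
    parallelepipedLattice W × (ι → ℕ) ≃ coneLattice W :=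
  Equiv.ofBijective (fun p => ⟨p.1 + ∑ i, p.2 i • W i, add_sum_nsmul_mem_coneLattice p.1.2 p.2⟩)
    ⟨fun ⟨q, m⟩ ⟨q', m'⟩ h => by
      have h : q.1 + ∑ i, m i • W i = q'.1 + ∑ i, m' i • W i := congrArg Subtype.val h
      obtain rfl := eq_of_add_sum_nsmul_eq hW q.2 q'.2 h
      rw [Subtype.ext (add_right_cancel h)],
    fun y => by
      obtain ⟨q, hq, m, hy⟩ := exists_add_sum_nsmul_eq y.2
      exact ⟨(⟨q, hq⟩, m), Subtype.ext hy⟩⟩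

variable {k : κ}

theorem coord_eq_sum_of_eq_sum (hk : ∀ i, W i k = 1) {y : κ → ℤ} {c : ι → ℝ}
    (hy : (fun j => (y j : ℝ)) = ∑ i, c i • fun j => (W i j : ℝ)) : (y k : ℝ) = ∑ i, c i := by
  simpa [Finset.sum_apply, hk] using congrFun hy k

theorem coord_nonneg_of_mem_coneLattice (hk : ∀ i, W i k = 1) {y : κ → ℤ}
    (hy : y ∈ coneLattice W) : 0 ≤ y k := by
  obtain ⟨c, hc, hyc⟩ := hy
  have : (0 : ℝ) ≤ y k := by
    rw [coord_eq_sum_of_eq_sum hk hyc]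
    exact sum_nonneg fun i _ => hc i
  exact_mod_cast this

theorem coord_lt_card_of_mem_parallelepipedLattice [Nonempty ι] (hk : ∀ i, W i k = 1) {q : κ → ℤ}
    (hq : q ∈ parallelepipedLattice W) : q k < Fintype.card ι := by
  obtain ⟨c, hc, hqc⟩ := hq
  have : (q k : ℝ) < Fintype.card ι := by
    calc (q k : ℝ) = ∑ i, c i := coord_eq_sum_of_eq_sum hk hqc
      _ < ∑ _i : ι, (1 : ℝ) := sum_lt_sum_of_nonempty univ_nonempty fun i _ => (hc i).2
      _ = Fintype.card ι := by simp
  exact_mod_cast this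

theorem parallelepipedLattice_subset_coneLattice : parallelepipedLattice W ⊆ coneLattice W :=
  fun _ ⟨c, hc, hqc⟩ => ⟨c, fun i => (hc i).1, hqc⟩

theorem coneLattice_coord_eq_zero (hk : ∀ i, W i k = 1) :
    {y | y ∈ coneLattice W ∧ y k = 0} = {0} := by
  ext y
  refine ⟨fun ⟨⟨c, hc, hyc⟩, hyk⟩ => ?_, ?_⟩
  · have hc0 : ∀ i, c i = 0 := by
      have := coord_eq_sum_of_eq_sum hk hyc
      rw [hyk, Int.cast_zero, eq_comm, sum_eq_zero_iff_of_nonneg fun i _ => hc i] at this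
      exact fun i => this i (mem_univ i)
    ext j
    simpa [hc0] using congrFun hyc j
  · rintro rfl
    exact ⟨⟨0, fun _ => le_rfl, by ext; simp⟩, rfl⟩

theorem parallelepipedLattice_finite [Fintype κ] : (parallelepipedLattice W).Finite := by
  refine (Set.finite_Icc (-fun j => ∑ i, |W i j|) fun j => ∑ i, |W i j|).subset ?_
  rintro y ⟨c, hc, hyc⟩
  have hbound : ∀ j, |(y j : ℝ)| ≤ ∑ i, |(W i j : ℝ)| := fun j => by
    rw [congrFun hyc j, Finset.sum_apply]
    refine (abs_sum_le_sum_abs _ _).trans (sum_le_sum fun i _ => ?_)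
    rw [Pi.smul_apply, smul_eq_mul, abs_mul, abs_of_nonneg (hc i).1]
    exact mul_le_of_le_one_left (abs_nonneg _) (hc i).2.le
  have hbound' : ∀ j, |y j| ≤ ∑ i, |W i j| := fun j => by exact_mod_cast hbound j
  exact ⟨fun j => neg_le_of_abs_le (hbound' j), fun j => le_of_abs_le (hbound' j)⟩

theorem heightSeries_eq_fiberSeries {S : Set (κ → ℤ)} (hS : ∀ y ∈ S, 0 ≤ y k) :
    heightSeries k S = fiberSeries fun y : S => (y.1 k).toNat := by
  ext t
  simp only [heightSeries, fiberSeries, PowerSeries.coeff_mk]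
  refine congrArg _ (Nat.card_congr ?_)
  refine (Equiv.subtypeEquivRight fun y => and_congr_right fun hy => ?_).trans
    (Equiv.subtypeSubtypeEquivSubtypeInter (· ∈ S) fun y => (y k).toNat = t).symm
  have := hS y hy
  omega

theorem heightSeries_coneLattice [Fintype κ] (hW : LinearIndependent ℝ fun i j => (W i j : ℝ))
    (hk : ∀ i, W i k = 1) :
    heightSeries k (coneLattice W) =
      heightSeries k (parallelepipedLattice W) * PowerSeries.mk 1 ^ Fintype.card ι := by
  have : Finite (parallelepipedLattice W) := parallelepipedLattice_finite.to_subtype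
  rw [heightSeries_eq_fiberSeries fun _ => coord_nonneg_of_mem_coneLattice hk,
    heightSeries_eq_fiberSeries fun _ hq =>
      coord_nonneg_of_mem_coneLattice hk (parallelepipedLattice_subset_coneLattice hq),
    ← fiberSeries_sum, ← fiberSeries_add]
  refine (fiberSeries_congr (parallelepipedLatticeProdEquiv hW) fun ⟨q, m⟩ => ?_).symm
  have := coord_nonneg_of_mem_coneLattice hk (parallelepipedLattice_subset_coneLattice q.2)
  have hsum : (q.1 + ∑ i, m i • W i) k = q.1 k + ((∑ i, m i : ℕ) : ℤ) := by
    simp [Finset.sum_apply, hk]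
  change ((q.1 + ∑ i, m i • W i) k).toNat = (q.1 k).toNat + ∑ i, m i
  omega

end Lattice

theorem heightSeries_eq_sum_range {κ : Type*} {k : κ} {S : Set (κ → ℤ)} {N : ℕ}
    (hS : ∀ y ∈ S, y k < N) :
    heightSeries k S = ∑ t ∈ range N,
      (PowerSeries.C : ℤ →+* PowerSeries ℤ) (Nat.card {y // y ∈ S ∧ y k = (t : ℤ)} : ℤ) *
        PowerSeries.X ^ t := by
  ext s
  simp only [heightSeries, PowerSeries.coeff_mk, map_sum, PowerSeries.coeff_C_mul_X_pow,
    sum_ite_eq, mem_range]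
  split_ifs with hs
  · rfl
  · have : IsEmpty {y // y ∈ S ∧ y k = (s : ℤ)} := ⟨fun y => by have := hS _ y.2.1; omega⟩
    simp

section Simplex

variable {ι : Type*} {n : ℕ}

theorem sum_smul_snoc_one {R : Type*} [Semiring R] (s : Finset ι) (c : ι → R)
    (p : ι → Fin n → R) :
    ∑ i ∈ s, c i • (Fin.snoc (p i) 1 : Fin (n + 1) → R) =
      Fin.snoc (∑ i ∈ s, c i • p i) (∑ i ∈ s, c i) := by
  ext j
  refine Fin.lastCases ?_ (fun j => ?_) j <;> simp [Finset.sum_apply]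

theorem intCast_snoc {R : Type*} [IntCast R] (a : Fin n → ℤ) (b : ℤ) :
    (fun j => ((Fin.snoc a b : Fin (n + 1) → ℤ) j : R)) = Fin.snoc (fun j => (a j : R)) (b : R) :=
  Fin.comp_snoc Int.cast a b

theorem AffineIndependent.linearIndependent_snoc_one {R : Type*} [Ring R] {p : ι → Fin n → R}
    (hp : AffineIndependent R p) :
    LinearIndependent R fun i => (Fin.snoc (p i) 1 : Fin (n + 1) → R) := by
  refine linearIndependent_iff'ₛ.2 fun s f g h => ?_
  rw [sum_smul_snoc_one, sum_smul_snoc_one, Fin.snoc_inj] at h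
  exact hp.eq_of_sum_eq_sum h.2 h.1

variable [Fintype ι] {𝕜 E : Type*} [Field 𝕜] [LinearOrder 𝕜] [IsStrictOrderedRing 𝕜]
  [AddCommGroup E] [Module 𝕜 E]

theorem mem_convexHull_range_iff (p : ι → E) {x : E} :
    x ∈ convexHull 𝕜 (Set.range p) ↔ ∃ c ∈ stdSimplex 𝕜 ι, ∑ i, c i • p i = x := by
  have : Set.range p = Fintype.linearCombination 𝕜 p '' Set.range fun i => Pi.single i 1 := by
    rw [← Set.range_comp]
    congr
    funext i
    simp [Fintype.linearCombination_apply_single]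
  rw [this, ← LinearMap.image_convexHull, convexHull_rangle_single_eq_stdSimplex]
  simp [Fintype.linearCombination_apply]

theorem mem_smul_convexHull_range_iff (p : ι → E) {t : 𝕜} (ht : 0 < t) {x : E} :
    x ∈ t • convexHull 𝕜 (Set.range p) ↔
      ∃ c : ι → 𝕜, (∀ i, 0 ≤ c i) ∧ ∑ i, c i = t ∧ ∑ i, c i • p i = x := by
  simp_rw [Set.mem_smul_set, mem_convexHull_range_iff]
  constructor
  · rintro ⟨_, ⟨c, ⟨hc0, hc1⟩, rfl⟩, rfl⟩
    exact ⟨t • c, fun i => mul_nonneg ht.le (hc0 i), by simp [← mul_sum, hc1],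
      by simp [smul_sum, smul_smul]⟩
  · rintro ⟨c, hc0, hc1, rfl⟩
    refine ⟨_, ⟨t⁻¹ • c, ⟨fun i => mul_nonneg (inv_nonneg.2 ht.le) (hc0 i), ?_⟩, rfl⟩, ?_⟩
    · simp [← mul_sum, hc1, ht.ne']
    · simp [smul_sum, smul_smul, ht.ne']

theorem card_smul_convexHull_lattice_eq_card_coneLattice (v : ι → Fin n → ℤ) {t : ℕ}
    (ht : t ≠ 0) :
    Nat.card {x : Fin n → ℤ // (fun j => (x j : ℝ)) ∈
        (t : ℝ) • convexHull ℝ (Set.range fun i j => (v i j : ℝ))} =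
      Nat.card {y // y ∈ coneLattice (fun i => (Fin.snoc (v i) 1 : Fin (n + 1) → ℤ)) ∧
        y (Fin.last n) = t} := by
  have hmem : ∀ x : Fin n → ℤ, Fin.snoc x (t : ℤ) ∈ coneLattice (fun i => Fin.snoc (v i) 1) ↔
      (fun j => (x j : ℝ)) ∈ (t : ℝ) • convexHull ℝ (Set.range fun i j => (v i j : ℝ)) := by
    intro x
    rw [mem_smul_convexHull_range_iff _ (by positivity)]
    simp only [coneLattice, Set.mem_ofPred_eq, intCast_snoc, Int.cast_one, sum_smul_snoc_one,
      Fin.snoc_inj, Int.cast_natCast]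
    exact exists_congr fun c => by
      constructor <;> rintro ⟨hc, hx, ht⟩ <;> exact ⟨hc, ht.symm, hx.symm⟩
  have hsnoc : ∀ y : Fin (n + 1) → ℤ, y (Fin.last n) = t → Fin.snoc (Fin.init y) (t : ℤ) = y :=
    fun y hy => hy ▸ Fin.snoc_init_self y
  exact Nat.card_congr
    { toFun := fun x => ⟨Fin.snoc x.1 t, (hmem x.1).2 x.2, Fin.snoc_last _ _⟩
      invFun := fun y => ⟨Fin.init y.1, (hmem _).1 (by rw [hsnoc _ y.2.2]; exact y.2.1)⟩
      left_inv := fun x => Subtype.ext (Fin.init_snoc (α := fun _ => ℤ) _ x.1)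
      right_inv := fun y => Subtype.ext (hsnoc _ y.2.2) }

end Simplex

end

/-- **The Ehrhart series of a lattice simplex.** Let `Δ ⊂ ℝ^d` be a lattice `d`-simplex with
vertices `v_0, …, v_d ∈ ℤ^d`, and let `Q ⊂ ℝ^{d+1}` be the half-open fundamental
parallelepiped of the cone over `Δ`, spanned by the lifted vertices `w_i = (v_i, 1)`.
Then `(1 + ∑_{t≥1} #(tΔ ∩ ℤ^d) z^t)(1-z)^{d+1} = ∑_{t=0}^{d} h_t z^t`, where `h_t` is the
number of lattice points of `Q` at height `t`. -/
theorem ehrhart_series_simplex (d : ℕ) (v : Fin (d + 1) → Fin d → ℤ)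
    (hv : AffineIndependent ℝ (fun i => fun j => (v i j : ℝ)))
    (w : Fin (d + 1) → Fin (d + 1) → ℝ)
    (hw : ∀ i, w i = Fin.snoc (fun j => (v i j : ℝ)) 1)
    (Δ : Set (Fin d → ℝ))
    (hΔ : Δ = convexHull ℝ (Set.range fun i => fun j => (v i j : ℝ)))
    (Q : Set (Fin (d + 1) → ℝ))
    (hQ : Q = {y | ∃ lam : Fin (d + 1) → ℝ, (∀ i, 0 ≤ lam i ∧ lam i < 1) ∧
      y = ∑ i, lam i • w i}) :
    (PowerSeries.mk fun t => if t = 0 then (1 : ℤ) else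
        (Nat.card {x : Fin d → ℤ // (fun j => (x j : ℝ)) ∈ (t : ℝ) • Δ} : ℤ))
      * (1 - PowerSeries.X) ^ (d + 1)
    = ∑ t ∈ Finset.range (d + 1),
        (PowerSeries.C : ℤ →+* PowerSeries ℤ)
          (Nat.card {y : Fin (d + 1) → ℤ //
            (fun j => (y j : ℝ)) ∈ Q ∧ y (Fin.last d) = (t : ℤ)} : ℤ)
          * PowerSeries.X ^ t := by
  set W : Fin (d + 1) → Fin (d + 1) → ℤ := fun i => Fin.snoc (v i) 1
  have hwW : w = fun i j => (W i j : ℝ) := by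
    funext i
    rw [hw, intCast_snoc, Int.cast_one]
  have hk : ∀ i, W i (Fin.last d) = 1 := fun i => Fin.snoc_last _ _
  have hW : LinearIndependent ℝ fun i j => (W i j : ℝ) := by
    rw [← hwW, funext hw]
    exact hv.linearIndependent_snoc_one
  subst hΔ hQ hwW
  calc _ = heightSeries (Fin.last d) (coneLattice W) * (1 - PowerSeries.X) ^ (d + 1) := by
        congr 1
        ext t
        simp only [PowerSeries.coeff_mk, heightSeries]
        split_ifs with ht
        · subst ht
          rw [Nat.cast_zero, ← Set.coe_ofPred, coneLattice_coord_eq_zero hk, Nat.card_unique,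
            Nat.cast_one]
        · rw [card_smul_convexHull_lattice_eq_card_coneLattice v ht]
    _ = heightSeries (Fin.last d) (parallelepipedLattice W) := by
        rw [heightSeries_coneLattice hW hk, Fintype.card_fin, mul_assoc, ← mul_pow,
          PowerSeries.mk_one_mul_one_sub_eq_one, one_pow, mul_one]
    _ = _ := heightSeries_eq_sum_range fun q hq => by
        simpa using coord_lt_card_of_mem_parallelepipedLattice hk hq
end
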